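/- arXiv:2311.11247 — 5 statements merged into one kernel-verified Lean document; each statement's English description precedes it below -/
import Mathlib

section
/- Under Assumptions 1(1) and 2, suppose V ∈ Y is a nonzero nonnegative fixed point of Ψ, i.e. V(x) = ∫_Ω Θ(x,σ)N(σ)(1 − e^{−V(σ)}) dσ a.e. Then for every H_∞ ∈ Y with H_∞ ≥ 0 a.e., every nonzero nonnegative W_∞ ∈ Y satisfying W_∞(x) = H_∞(x) + ∫_Ω Θ(x,σ)N(σ)(1 − e^{−W_∞(σ)}) dσ a.e. satisfies W_∞(x) ≥ V(x) for a.e. x. -/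
open MeasureTheory Set

/-- `Θ(x,σ) = ∫_0^∞ A(τ,x,σ) dτ`. -/
noncomputable def Theta {n : ℕ} (A : ℝ → (Fin n → ℝ) → (Fin n → ℝ) → ℝ)
    (x σ : Fin n → ℝ) : ℝ :=
  ∫ τ in Ici (0:ℝ), A τ x σ

/-- The nonlinear operator `(Ψψ)(x) = ∫_Ω Θ(x,σ) N(σ)(1 - e^{-ψ(σ)}) dσ`. -/
noncomputable def PsiOp {n : ℕ} (Ω : Set (Fin n → ℝ))
    (A : ℝ → (Fin n → ℝ) → (Fin n → ℝ) → ℝ) (N : (Fin n → ℝ) → ℝ)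
    (ψ : (Fin n → ℝ) → ℝ) (x : Fin n → ℝ) : ℝ :=
  ∫ σ in Ω, Theta A x σ * N σ * (1 - Real.exp (-ψ σ))

/-!
Write `Ψ u = ∫ k(x,σ) (1 - e^{-u(σ)}) dσ` with `k = Θ N` pinched between `m(x) w(σ)` and
`α m(x) w(σ)`, where `m = a L` and `w = c N`. By Assumption 2, `J(u) = ∫ w (1 - e^{-u}) > 0` for
`u ≥ 0` nonzero, so `V = Ψ V ≤ α m J(V)` and `W ≥ Ψ W ≥ m J(W)` give `ℓ V ≤ W` for some `ℓ > 0`.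
Let `ℓ* ≤ 1` be the largest such constant (it is attained, as a countable intersection of a.e.
statements). If `ℓ* < 1`, strict concavity of `t ↦ 1 - e^{-t}` gives
`Ψ(ℓ* V) ≥ ℓ* Ψ V + m K = ℓ* V + m K` with `K > 0`, and `m K ≥ (K / (α J(V))) V`; as `Ψ` is
monotone, `W ≥ Ψ W ≥ Ψ(ℓ* V) ≥ (ℓ* + K / (α J(V))) V` contradicts maximality.
-/

open Filter Topology

lemma one_sub_exp_neg_nonneg {t : ℝ} (ht : 0 ≤ t) : 0 ≤ 1 - Real.exp (-t) := by
  have := Real.exp_le_one_iff.2 (neg_nonpos.2 ht)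
  linarith

lemma one_sub_exp_neg_le_one (t : ℝ) : 1 - Real.exp (-t) ≤ 1 := by
  have := Real.exp_pos (-t)
  linarith

lemma one_sub_exp_neg_eq_zero_iff {t : ℝ} : 1 - Real.exp (-t) = 0 ↔ t = 0 := by
  rw [sub_eq_zero, eq_comm, Real.exp_eq_one_iff, neg_eq_zero]

lemma mul_one_sub_exp_neg_le (t : ℝ) {l : ℝ} (hl₀ : 0 ≤ l) (hl₁ : l ≤ 1) :
    l * (1 - Real.exp (-t)) ≤ 1 - Real.exp (-(l * t)) := by
  have h := convexOn_exp.2 (mem_univ (-t)) (mem_univ 0) hl₀ (sub_nonneg.2 hl₁)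
    (add_sub_cancel l 1)
  simp only [smul_eq_mul, mul_zero, add_zero, Real.exp_zero, mul_one, mul_neg] at h
  linarith

lemma mul_one_sub_exp_neg_lt {t l : ℝ} (ht : t ≠ 0) (hl₀ : 0 < l) (hl₁ : l < 1) :
    l * (1 - Real.exp (-t)) < 1 - Real.exp (-(l * t)) := by
  have h := strictConvexOn_exp.2 (mem_univ (-t)) (mem_univ 0) (neg_ne_zero.2 ht) hl₀
    (sub_pos.2 hl₁) (add_sub_cancel l 1)
  simp only [smul_eq_mul, mul_zero, add_zero, Real.exp_zero, mul_one, mul_neg] at h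
  linarith

lemma one_sub_exp_neg_mul_sub_mem_Icc {t l : ℝ} (ht : 0 ≤ t) (hl₀ : 0 ≤ l) (hl₁ : l ≤ 1) :
    1 - Real.exp (-(l * t)) - l * (1 - Real.exp (-t)) ∈ Icc 0 1 :=
  ⟨sub_nonneg.2 (mul_one_sub_exp_neg_le t hl₀ hl₁), by
    nlinarith [one_sub_exp_neg_le_one (l * t), one_sub_exp_neg_nonneg ht]⟩

section Measure

variable {X : Type*} [MeasurableSpace X] {μ : Measure X}

lemma integrable_and_integral_mem_Icc_of_ae_mem_Icc {f g : X → ℝ} {p q : ℝ}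
    (hg : Integrable g μ) (hf : AEStronglyMeasurable f μ) (hf₀ : ∀ᵐ x ∂μ, 0 ≤ f x)
    (h : ∀ᵐ x ∂μ, f x ∈ Icc (p * g x) (q * g x)) :
    Integrable f μ ∧ ∫ x, f x ∂μ ∈ Icc (p * ∫ x, g x ∂μ) (q * ∫ x, g x ∂μ) := by
  have hfi : Integrable f μ := by
    refine (hg.const_mul q).mono' hf ?_
    filter_upwards [h, hf₀] with x hx h₀
    rw [Real.norm_of_nonneg h₀]
    exact hx.2
  refine ⟨hfi, ?_, ?_⟩
  · rw [← integral_const_mul]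
    exact integral_mono_ae (hg.const_mul p) hfi (h.mono fun x hx => hx.1)
  · rw [← integral_const_mul]
    exact integral_mono_ae hfi (hg.const_mul q) (h.mono fun x hx => hx.2)

lemma aemeasurable_of_integrable_mul {ψ N : X → ℝ} (hN : AEMeasurable N μ)
    (hNpos : ∀ᵐ x ∂μ, 0 < N x) (h : Integrable (fun x => ψ x * N x) μ) : AEMeasurable ψ μ := by
  refine (h.aemeasurable.div hN).congr ?_
  filter_upwards [hNpos] with x hx
  exact mul_div_cancel_right₀ _ hx.ne'

variable {V W : X → ℝ}

lemma ae_mul_le_of_tendsto {u : ℕ → ℝ} {l : ℝ} (hu : Tendsto u atTop (𝓝 l))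
    (h : ∀ n, ∀ᵐ x ∂μ, u n * V x ≤ W x) : ∀ᵐ x ∂μ, l * V x ≤ W x := by
  filter_upwards [ae_all_iff.2 h] with x hx
  exact le_of_tendsto' (hu.mul_const (V x)) hx

lemma ae_le_of_mul_le_of_forall_exists_add_mul_le (hV : ∀ᵐ x ∂μ, 0 ≤ V x) {l₀ : ℝ}
    (hl₀ : 0 < l₀) (h₀ : ∀ᵐ x ∂μ, l₀ * V x ≤ W x)
    (hstep : ∀ l, 0 < l → l < 1 → (∀ᵐ x ∂μ, l * V x ≤ W x) →
      ∃ e > 0, ∀ᵐ x ∂μ, (l + e) * V x ≤ W x) :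
    ∀ᵐ x ∂μ, V x ≤ W x := by
  have antitone : ∀ {l l'}, l' ≤ l → (∀ᵐ x ∂μ, l * V x ≤ W x) → ∀ᵐ x ∂μ, l' * V x ≤ W x := by
    intro l l' hll' h
    filter_upwards [h, hV] with x hx hVx
    exact (mul_le_mul_of_nonneg_right hll' hVx).trans hx
  set S := {l : ℝ | l ≤ 1 ∧ ∀ᵐ x ∂μ, l * V x ≤ W x}
  have hS : min l₀ 1 ∈ S := ⟨min_le_right _ _, antitone (min_le_left _ _) h₀⟩
  have hbdd : BddAbove S := ⟨1, fun l hl => hl.1⟩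
  obtain ⟨u, -, hu, huS⟩ := exists_seq_tendsto_sSup ⟨_, hS⟩ hbdd
  have hsup : ∀ᵐ x ∂μ, sSup S * V x ≤ W x := ae_mul_le_of_tendsto hu fun n => (huS n).2
  have hpos : 0 < sSup S := (lt_min hl₀ one_pos).trans_le (le_csSup hbdd hS)
  obtain heq | hlt := (csSup_le ⟨_, hS⟩ fun l hl => hl.1 : sSup S ≤ 1).eq_or_lt
  · simpa [heq] using hsup
  obtain ⟨e, he, hae⟩ := hstep _ hpos hlt hsup
  have hmem : min (sSup S + e) 1 ∈ S := ⟨min_le_right _ _, antitone (min_le_left _ _) hae⟩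
  exact absurd (le_csSup hbdd hmem) (not_le.2 (lt_min (by linarith) hlt))

end Measure

section Kernel

variable {X : Type*} [MeasurableSpace X] {μ : Measure X}

structure IsSeparablyBounded (μ : Measure X) (k : X → X → ℝ) (m w : X → ℝ) (α : ℝ) : Prop where
  nonneg : ∀ x σ, 0 ≤ k x σ
  aestronglyMeasurable : ∀ x, AEStronglyMeasurable (k x) μ
  integrable : Integrable w μ
  mem_Icc : ∀ᵐ x ∂μ, ∀ᵐ σ ∂μ, k x σ ∈ Icc (m x * w σ) (α * (m x * w σ))

noncomputable def finalSizeOp (μ : Measure X) (k : X → X → ℝ) (u : X → ℝ) (x : X) : ℝ :=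
  ∫ σ, k x σ * (1 - Real.exp (-u σ)) ∂μ

variable {k : X → X → ℝ} {m w : X → ℝ} {α : ℝ}

lemma IsSeparablyBounded.integral_mem_Icc (hk : IsSeparablyBounded μ k m w α) {u : X → ℝ}
    (hu : AEMeasurable u μ) (hu₀ : ∀ᵐ σ ∂μ, 0 ≤ u σ) (hu₁ : ∀ᵐ σ ∂μ, u σ ≤ 1) :
    ∀ᵐ x ∂μ, Integrable (fun σ => k x σ * u σ) μ ∧
      ∫ σ, k x σ * u σ ∂μ ∈ Icc (m x * ∫ σ, w σ * u σ ∂μ) (α * m x * ∫ σ, w σ * u σ ∂μ) := by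
  have hwu : Integrable (fun σ => w σ * u σ) μ :=
    hk.integrable.mul_bdd hu.aestronglyMeasurable (c := 1) <| by
      filter_upwards [hu₀, hu₁] with σ h₀ h₁
      rwa [Real.norm_of_nonneg h₀]
  filter_upwards [hk.mem_Icc] with x hx
  refine integrable_and_integral_mem_Icc_of_ae_mem_Icc hwu
    ((hk.aestronglyMeasurable x).mul hu.aestronglyMeasurable)
    (hu₀.mono fun σ h => mul_nonneg (hk.nonneg x σ) h) ?_
  filter_upwards [hx, hu₀] with σ hσ h₀
  constructor <;> nlinarith [hσ.1, hσ.2]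

lemma IsSeparablyBounded.finalSizeOp_mem_Icc (hk : IsSeparablyBounded μ k m w α) {u : X → ℝ}
    (hu : AEMeasurable u μ) (hu₀ : ∀ᵐ σ ∂μ, 0 ≤ u σ) :
    ∀ᵐ x ∂μ, Integrable (fun σ => k x σ * (1 - Real.exp (-u σ))) μ ∧
      finalSizeOp μ k u x ∈ Icc (m x * ∫ σ, w σ * (1 - Real.exp (-u σ)) ∂μ)
        (α * m x * ∫ σ, w σ * (1 - Real.exp (-u σ)) ∂μ) :=
  hk.integral_mem_Icc (by fun_prop) (hu₀.mono fun σ => one_sub_exp_neg_nonneg)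
    (ae_of_all _ fun σ => one_sub_exp_neg_le_one _)

lemma IsSeparablyBounded.finalSizeOp_mono (hk : IsSeparablyBounded μ k m w α) {u v : X → ℝ}
    (hu : AEMeasurable u μ) (hv : AEMeasurable v μ) (hu₀ : ∀ᵐ σ ∂μ, 0 ≤ u σ)
    (huv : ∀ᵐ σ ∂μ, u σ ≤ v σ) :
    ∀ᵐ x ∂μ, finalSizeOp μ k u x ≤ finalSizeOp μ k v x := by
  have hv₀ : ∀ᵐ σ ∂μ, 0 ≤ v σ := by filter_upwards [hu₀, huv] with σ h h' using h.trans h'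
  filter_upwards [hk.finalSizeOp_mem_Icc hu hu₀, hk.finalSizeOp_mem_Icc hv hv₀] with x hux hvx
  refine integral_mono_ae hux.1 hvx.1 (huv.mono fun σ h => ?_)
  exact mul_le_mul_of_nonneg_left (sub_le_sub_left (Real.exp_le_exp.2 (neg_le_neg h)) 1)
    (hk.nonneg x σ)

lemma IsSeparablyBounded.mul_finalSizeOp_add_le (hk : IsSeparablyBounded μ k m w α) {V : X → ℝ}
    (hV : AEMeasurable V μ) (hV₀ : ∀ᵐ σ ∂μ, 0 ≤ V σ) {l : ℝ} (hl₀ : 0 ≤ l) (hl₁ : l ≤ 1) :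
    ∀ᵐ x ∂μ, l * finalSizeOp μ k V x
        + m x * ∫ σ, w σ * (1 - Real.exp (-(l * V σ)) - l * (1 - Real.exp (-V σ))) ∂μ
      ≤ finalSizeOp μ k (fun σ => l * V σ) x := by
  have hG := hk.integral_mem_Icc
    (u := fun σ => 1 - Real.exp (-(l * V σ)) - l * (1 - Real.exp (-V σ))) (by fun_prop)
    (hV₀.mono fun σ h => (one_sub_exp_neg_mul_sub_mem_Icc h hl₀ hl₁).1)
    (hV₀.mono fun σ h => (one_sub_exp_neg_mul_sub_mem_Icc h hl₀ hl₁).2)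
  filter_upwards [hk.finalSizeOp_mem_Icc hV hV₀, hG] with x hFx hGx
  have hsplit : finalSizeOp μ k (fun σ => l * V σ) x = l * finalSizeOp μ k V x
      + ∫ σ, k x σ * (1 - Real.exp (-(l * V σ)) - l * (1 - Real.exp (-V σ))) ∂μ := by
    rw [finalSizeOp, finalSizeOp, ← integral_const_mul, ← integral_add (hFx.1.const_mul l) hGx.1]
    congr 1 with σ
    ring
  linarith [hGx.2.1]

def IsPositiveWeight (μ : Measure X) (w : X → ℝ) : Prop :=
  ∀ u : X → ℝ, AEMeasurable u μ → (∀ᵐ σ ∂μ, 0 ≤ u σ) → (∀ᵐ σ ∂μ, u σ ≤ 1) → ¬ u =ᵐ[μ] 0 →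
    0 < ∫ σ, w σ * u σ ∂μ

lemma IsPositiveWeight.integral_mul_one_sub_exp_neg_pos (hw : IsPositiveWeight μ w) {u : X → ℝ}
    (hu : AEMeasurable u μ) (hu₀ : ∀ᵐ σ ∂μ, 0 ≤ u σ) (hu_ne : ¬ u =ᵐ[μ] 0) :
    0 < ∫ σ, w σ * (1 - Real.exp (-u σ)) ∂μ :=
  hw _ (by fun_prop) (hu₀.mono fun σ => one_sub_exp_neg_nonneg)
    (ae_of_all _ fun σ => one_sub_exp_neg_le_one _)
    fun h => hu_ne <| h.mono fun σ hσ => one_sub_exp_neg_eq_zero_iff.1 hσ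

lemma div_mul_le_mul_of_le_mul {K J α v m : ℝ} (hαJ : 0 < α * J) (hK : 0 ≤ K)
    (hv : v ≤ α * m * J) : K / (α * J) * v ≤ m * K := by
  rw [div_mul_eq_mul_div, div_le_iff₀ hαJ]
  nlinarith

lemma IsSeparablyBounded.exists_add_mul_le_finalSizeOp (hk : IsSeparablyBounded μ k m w α)
    (hw : IsPositiveWeight μ w) (hα : 0 < α) {V : X → ℝ} (hV : AEMeasurable V μ)
    (hV₀ : ∀ᵐ σ ∂μ, 0 ≤ V σ) (hV_ne : ¬ V =ᵐ[μ] 0) (hVfix : ∀ᵐ x ∂μ, V x = finalSizeOp μ k V x)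
    {l : ℝ} (hl₀ : 0 < l) (hl₁ : l < 1) :
    ∃ e > 0, ∀ᵐ x ∂μ, (l + e) * V x ≤ finalSizeOp μ k (fun σ => l * V σ) x := by
  set J := ∫ σ, w σ * (1 - Real.exp (-V σ)) ∂μ
  set K := ∫ σ, w σ * (1 - Real.exp (-(l * V σ)) - l * (1 - Real.exp (-V σ))) ∂μ
  have hαJ : 0 < α * J := mul_pos hα (hw.integral_mul_one_sub_exp_neg_pos hV hV₀ hV_ne)
  have hK : 0 < K := by
    refine hw _ (by fun_prop)
      (hV₀.mono fun σ h => (one_sub_exp_neg_mul_sub_mem_Icc h hl₀.le hl₁.le).1)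
      (hV₀.mono fun σ h => (one_sub_exp_neg_mul_sub_mem_Icc h hl₀.le hl₁.le).2) fun h => hV_ne ?_
    filter_upwards [h] with σ hσ
    by_contra hVσ
    exact (sub_pos.2 (mul_one_sub_exp_neg_lt hVσ hl₀ hl₁)).ne' hσ
  refine ⟨K / (α * J), div_pos hK hαJ, ?_⟩
  filter_upwards [hVfix, hk.finalSizeOp_mem_Icc hV hV₀,
    hk.mul_finalSizeOp_add_le hV hV₀ hl₀.le hl₁.le] with x hfix hbound hgain
  have := div_mul_le_mul_of_le_mul hαJ hK.le (hfix.trans_le hbound.2.2)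
  rw [← hfix] at hgain
  linarith

theorem IsSeparablyBounded.ae_le_of_finalSizeOp_le (hk : IsSeparablyBounded μ k m w α)
    (hw : IsPositiveWeight μ w) (hα : 0 < α) {V W : X → ℝ} (hV : AEMeasurable V μ)
    (hV₀ : ∀ᵐ σ ∂μ, 0 ≤ V σ) (hV_ne : ¬ V =ᵐ[μ] 0) (hVfix : ∀ᵐ x ∂μ, V x = finalSizeOp μ k V x)
    (hW : AEMeasurable W μ) (hW₀ : ∀ᵐ σ ∂μ, 0 ≤ W σ) (hW_ne : ¬ W =ᵐ[μ] 0)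
    (hWsuper : ∀ᵐ x ∂μ, finalSizeOp μ k W x ≤ W x) :
    ∀ᵐ x ∂μ, V x ≤ W x := by
  set JV := ∫ σ, w σ * (1 - Real.exp (-V σ)) ∂μ
  set JW := ∫ σ, w σ * (1 - Real.exp (-W σ)) ∂μ
  have hαJ : 0 < α * JV := mul_pos hα (hw.integral_mul_one_sub_exp_neg_pos hV hV₀ hV_ne)
  have hJW : 0 < JW := hw.integral_mul_one_sub_exp_neg_pos hW hW₀ hW_ne
  refine ae_le_of_mul_le_of_forall_exists_add_mul_le hV₀ (div_pos hJW hαJ) ?_ ?_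
  · filter_upwards [hVfix, hk.finalSizeOp_mem_Icc hV hV₀, hk.finalSizeOp_mem_Icc hW hW₀,
      hWsuper] with x hfix hVx hWx hsuper
    linarith [div_mul_le_mul_of_le_mul hαJ hJW.le (hfix.trans_le hVx.2.2), hWx.2.1]
  · intro l hl₀ hl₁ hlV
    obtain ⟨e, he, hgain⟩ := hk.exists_add_mul_le_finalSizeOp hw hα hV hV₀ hV_ne hVfix hl₀ hl₁
    refine ⟨e, he, ?_⟩
    filter_upwards [hgain, hWsuper, hk.finalSizeOp_mono (by fun_prop) hW
      (hV₀.mono fun σ h => mul_nonneg hl₀.le h) hlV] with x hgain hsuper hmono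
    exact hgain.trans (hmono.trans hsuper)

end Kernel

section Theta

variable {n : ℕ} {A : ℝ → (Fin n → ℝ) → (Fin n → ℝ) → ℝ}

lemma measurable_Theta
    (hA : Measurable fun p : ℝ × (Fin n → ℝ) × (Fin n → ℝ) => A p.1 p.2.1 p.2.2)
    (x : Fin n → ℝ) : Measurable (Theta A x) :=
  (StronglyMeasurable.integral_prod_right' (ν := volume.restrict (Ici (0:ℝ)))
    (f := fun p : (Fin n → ℝ) × ℝ => A p.2 x p.1) (by fun_prop)).measurable

lemma Theta_mem_Icc {a c : (Fin n → ℝ) → ℝ} {b : ℝ → ℝ} {α : ℝ} {x σ : Fin n → ℝ}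
    (hA : Measurable fun τ => A τ x σ) (hA₀ : ∀ τ, 0 ≤ A τ x σ) (hb : IntegrableOn b (Ici 0))
    (hbound : ∀ τ ∈ Ici (0:ℝ), A τ x σ ∈ Icc (a x * b τ * c σ) (α * (a x * b τ * c σ))) :
    Theta A x σ ∈ Icc (a x * (∫ τ in Ici 0, b τ) * c σ)
      (α * (a x * (∫ τ in Ici 0, b τ) * c σ)) := by
  have h := (integrable_and_integral_mem_Icc_of_ae_mem_Icc hb hA.aestronglyMeasurable
    (ae_of_all _ hA₀) (p := a x * c σ) (q := α * (a x * c σ)) <| by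
      filter_upwards [ae_restrict_mem measurableSet_Ici] with τ hτ
      constructor <;> linarith [(hbound τ hτ).1, (hbound τ hτ).2]).2
  rw [Theta]
  constructor <;> linarith [h.1, h.2]

lemma isSeparablyBounded_Theta_mul {Ω : Set (Fin n → ℝ)} (hΩ : MeasurableSet Ω)
    {N : (Fin n → ℝ) → ℝ} (hN : Measurable N) (hN₀ : ∀ x, 0 ≤ N x)
    (hA : Measurable fun p : ℝ × (Fin n → ℝ) × (Fin n → ℝ) => A p.1 p.2.1 p.2.2)
    (hA₀ : ∀ τ x σ, 0 ≤ A τ x σ) {a c : (Fin n → ℝ) → ℝ} {b : ℝ → ℝ} {α : ℝ}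
    (hb : IntegrableOn b (Ici 0)) (hcN : IntegrableOn (fun x => c x * N x) Ω)
    (hbound : ∀ τ ∈ Ici (0:ℝ), ∀ x ∈ Ω, ∀ σ ∈ Ω,
      A τ x σ ∈ Icc (a x * b τ * c σ) (α * (a x * b τ * c σ))) :
    IsSeparablyBounded (volume.restrict Ω) (fun x σ => Theta A x σ * N σ)
      (fun x => a x * ∫ τ in Ici 0, b τ) (fun σ => c σ * N σ) α where
  nonneg x σ := mul_nonneg (integral_nonneg fun τ => hA₀ τ x σ) (hN₀ σ)
  aestronglyMeasurable x := ((measurable_Theta hA x).mul hN).aestronglyMeasurable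
  integrable := hcN
  mem_Icc := by
    filter_upwards [ae_restrict_mem hΩ] with x hx
    filter_upwards [ae_restrict_mem hΩ] with σ hσ
    have h := Theta_mem_Icc (by fun_prop) (hA₀ · x σ) hb fun τ hτ => hbound τ hτ x hx σ hσ
    constructor <;> nlinarith [h.1, h.2, hN₀ σ]

lemma isPositiveWeight_mul_of_integral_mul_pos {Ω : Set (Fin n → ℝ)} {N c : (Fin n → ℝ) → ℝ}
    (hN₀ : ∀ x, 0 ≤ N x) (hNint : IntegrableOn N Ω) (hNpos : ∀ᵐ x ∂(volume.restrict Ω), 0 < N x)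
    (hc : ∀ φ : (Fin n → ℝ) → ℝ, IntegrableOn φ Ω →
      (∀ᵐ x ∂(volume.restrict Ω), 0 ≤ φ x) → ¬ φ =ᵐ[volume.restrict Ω] 0 →
      0 < ∫ x in Ω, c x * φ x) :
    IsPositiveWeight (volume.restrict Ω) fun σ => c σ * N σ := by
  intro u hu hu₀ hu₁ hu_ne
  simp_rw [mul_assoc]
  refine hc _ (hNint.mul_bdd hu.aestronglyMeasurable (c := 1) ?_)
    (hu₀.mono fun σ h => mul_nonneg (hN₀ σ) h) fun h => hu_ne ?_
  · filter_upwards [hu₀, hu₁] with σ h₀ h₁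
    rwa [Real.norm_of_nonneg h₀]
  · filter_upwards [h, hNpos] with σ hσ hNσ
    exact (mul_eq_zero.1 hσ).resolve_left hNσ.ne'

lemma PsiOp_eq_finalSizeOp (Ω : Set (Fin n → ℝ)) (N : (Fin n → ℝ) → ℝ) :
    PsiOp Ω A N = finalSizeOp (volume.restrict Ω) fun x σ => Theta A x σ * N σ :=
  rfl

end Theta

theorem final_size_dominates_fixed_point_general
    {n : ℕ} (Ω : Set (Fin n → ℝ)) (hΩ : MeasurableSet Ω)
    (N : (Fin n → ℝ) → ℝ) (hNmeas : Measurable N) (hNnn : ∀ x, 0 ≤ N x)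
    (hNint : IntegrableOn N Ω)
    (hNpos : ∀ᵐ x ∂(volume.restrict Ω), 0 < N x)
    (A : ℝ → (Fin n → ℝ) → (Fin n → ℝ) → ℝ)
    (hAmeas : Measurable (fun p : ℝ × (Fin n → ℝ) × (Fin n → ℝ) => A p.1 p.2.1 p.2.2))
    (hAnn : ∀ τ x σ, 0 ≤ A τ x σ)
    (α : ℝ) (hα : 1 < α)
    (a : (Fin n → ℝ) → ℝ) (b : ℝ → ℝ) (c : (Fin n → ℝ) → ℝ)
    (hbint : IntegrableOn b (Ici 0))
    (hcN : IntegrableOn (fun x => c x * N x) Ω)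
    (hAbound : ∀ τ ∈ Ici (0:ℝ), ∀ x ∈ Ω, ∀ σ ∈ Ω,
      a x * b τ * c σ ≤ A τ x σ ∧ A τ x σ ≤ α * (a x * b τ * c σ))
    -- Assumption 2 (relevant part)
    (hcpos : ∀ φ : (Fin n → ℝ) → ℝ, IntegrableOn φ Ω →
      (∀ᵐ x ∂(volume.restrict Ω), 0 ≤ φ x) → ¬ φ =ᵐ[volume.restrict Ω] 0 →
      0 < ∫ x in Ω, c x * φ x)
    -- V is a nonzero nonnegative fixed point of Ψ in Y
    (V : (Fin n → ℝ) → ℝ)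
    (hVY : IntegrableOn (fun x => V x * N x) Ω)
    (hVnn : ∀ᵐ x ∂(volume.restrict Ω), 0 ≤ V x)
    (hVne : ¬ V =ᵐ[volume.restrict Ω] 0)
    (hVfix : ∀ᵐ x ∂(volume.restrict Ω), V x = PsiOp Ω A N V x) :
    ∀ Hinf : (Fin n → ℝ) → ℝ, IntegrableOn (fun x => Hinf x * N x) Ω →
      (∀ᵐ x ∂(volume.restrict Ω), 0 ≤ Hinf x) →
      ∀ Winf : (Fin n → ℝ) → ℝ, IntegrableOn (fun x => Winf x * N x) Ω →
        (∀ᵐ x ∂(volume.restrict Ω), 0 ≤ Winf x) →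
        ¬ Winf =ᵐ[volume.restrict Ω] 0 →
        (∀ᵐ x ∂(volume.restrict Ω), Winf x = Hinf x + PsiOp Ω A N Winf x) →
        ∀ᵐ x ∂(volume.restrict Ω), V x ≤ Winf x := by
  intro Hinf _ hHnn Winf hWY hWnn hWne hWeq
  have hk := isSeparablyBounded_Theta_mul hΩ hNmeas hNnn hAmeas hAnn hbint hcN hAbound
  have hw := isPositiveWeight_mul_of_integral_mul_pos hNnn hNint hNpos hcpos
  rw [PsiOp_eq_finalSizeOp] at hVfix hWeq
  refine hk.ae_le_of_finalSizeOp_le hw (zero_lt_one.trans hα)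
    (aemeasurable_of_integrable_mul hNmeas.aemeasurable hNpos hVY) hVnn hVne hVfix
    (aemeasurable_of_integrable_mul hNmeas.aemeasurable hNpos hWY) hWnn hWne ?_
  filter_upwards [hWeq, hHnn] with x hx hH
  linarith

/-- if V is a nonzero nonnegative fixed point of Ψ in Y, then every nonzero
nonnegative solution W_∞ ∈ Y of W_∞ = H_∞ + Ψ(W_∞) with H_∞ ∈ Y₊ dominates V a.e. -/
theorem final_size_dominates_fixed_point
    {n : ℕ} (Ω : Set (Fin n → ℝ)) (hΩ : MeasurableSet Ω)
    (N : (Fin n → ℝ) → ℝ) (hNmeas : Measurable N) (hNnn : ∀ x, 0 ≤ N x)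
    (hNint : IntegrableOn N Ω)
    (hNpos : ∀ᵐ x ∂(volume.restrict Ω), 0 < N x)
    (A : ℝ → (Fin n → ℝ) → (Fin n → ℝ) → ℝ)
    (hAmeas : Measurable (fun p : ℝ × (Fin n → ℝ) × (Fin n → ℝ) => A p.1 p.2.1 p.2.2))
    (hAnn : ∀ τ x σ, 0 ≤ A τ x σ)
    (α : ℝ) (hα : 1 < α)
    (a : (Fin n → ℝ) → ℝ) (b : ℝ → ℝ) (c : (Fin n → ℝ) → ℝ)
    (hameas : Measurable a) (hbmeas : Measurable b) (hcmeas : Measurable c)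
    (hann : ∀ x, 0 ≤ a x) (hbnn : ∀ τ, 0 ≤ b τ) (hcnn : ∀ σ, 0 ≤ c σ)
    (haN : IntegrableOn (fun x => a x * N x) Ω)
    (hbint : IntegrableOn b (Ici 0))
    (hcN : IntegrableOn (fun x => c x * N x) Ω)
    (hc2N : IntegrableOn (fun x => c x ^ 2 * N x) Ω)
    (hAbound : ∀ τ ∈ Ici (0:ℝ), ∀ x ∈ Ω, ∀ σ ∈ Ω,
      a x * b τ * c σ ≤ A τ x σ ∧ A τ x σ ≤ α * (a x * b τ * c σ))
    -- Assumption 2 (relevant part)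
    (hcbdd : ∃ M, ∀ x, c x ≤ M)
    (hcpos : ∀ φ : (Fin n → ℝ) → ℝ, IntegrableOn φ Ω →
      (∀ᵐ x ∂(volume.restrict Ω), 0 ≤ φ x) → ¬ φ =ᵐ[volume.restrict Ω] 0 →
      0 < ∫ x in Ω, c x * φ x)
    -- V is a nonzero nonnegative fixed point of Ψ in Y
    (V : (Fin n → ℝ) → ℝ)
    (hVY : IntegrableOn (fun x => V x * N x) Ω)
    (hVnn : ∀ᵐ x ∂(volume.restrict Ω), 0 ≤ V x)
    (hVne : ¬ V =ᵐ[volume.restrict Ω] 0)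
    (hVfix : ∀ᵐ x ∂(volume.restrict Ω), V x = PsiOp Ω A N V x) :
    ∀ Hinf : (Fin n → ℝ) → ℝ, IntegrableOn (fun x => Hinf x * N x) Ω →
      (∀ᵐ x ∂(volume.restrict Ω), 0 ≤ Hinf x) →
      ∀ Winf : (Fin n → ℝ) → ℝ, IntegrableOn (fun x => Winf x * N x) Ω →
        (∀ᵐ x ∂(volume.restrict Ω), 0 ≤ Winf x) →
        ¬ Winf =ᵐ[volume.restrict Ω] 0 →
        (∀ᵐ x ∂(volume.restrict Ω), Winf x = Hinf x + PsiOp Ω A N Winf x) →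
        ∀ᵐ x ∂(volume.restrict Ω), V x ≤ Winf x :=
  final_size_dominates_fixed_point_general Ω hΩ N hNmeas hNnn hNint hNpos A hAmeas hAnn α hα a b c
    hbint hcN hAbound hcpos V hVY hVnn hVne hVfix
end

section
/- For every φ ∈ L^∞(Ω) with φ ≥ 0 a.e., the effective reproduction numbers for S-control and I-control coincide: r(T_S[φ]) = r(T_I[φ]), where T_S[φ] and T_I[φ] are the bounded linear operators on L¹(Ω) given by (T_S[φ]ψ)(x) = N(x)e^{−φ(x)}∫_Ω Θ(x,σ)ψ(σ) dσ and (T_I[φ]ψ)(x) = N(x)∫_Ω Θ(x,σ)e^{−φ(σ)}ψ(σ) dσ. -/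
open MeasureTheory Set Filter
open scoped ENNReal

/-!
With `K` the integral operator with kernel `N(x) Θ(x,σ)` and `M` multiplication by `e^{-φ}`,
we have `T_S = M K` and `T_I = K M`, hence `M T_I = T_S M`. Since `φ` is bounded, `M` is invertible
on `L¹` with inverse multiplication by `e^{φ}`, so `T_S` and `T_I` are similar and have the same
spectrum.
-/

theorem spectrum_eq_of_semiconjBy {R A : Type*} [CommSemiring R] [Ring A] [Algebra R A]
    {a b : A} (u : Aˣ) (h : SemiconjBy (u : A) b a) : spectrum R a = spectrum R b := by
  rw [← spectrum.units_conjugate (a := b) (u := u), h.eq, mul_assoc, Units.mul_inv, mul_one]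

theorem spectralRadius_eq_of_semiconjBy {𝕜 A : Type*} [NormedField 𝕜] [Ring A] [Algebra 𝕜 A]
    {a b : A} (u : Aˣ) (h : SemiconjBy (u : A) b a) : spectralRadius 𝕜 a = spectralRadius 𝕜 b := by
  rw [spectralRadius, spectralRadius, spectrum_eq_of_semiconjBy u h]

namespace MeasureTheory.L1

variable {X : Type*} [MeasurableSpace X] {μ : Measure X}

variable (μ) in
noncomputable def mulOp (g : Lp ℝ ∞ μ) : Lp ℝ 1 μ →L[ℝ] Lp ℝ 1 μ :=
  (ContinuousLinearMap.mul ℝ ℝ).holderL μ ∞ 1 1 g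

theorem coeFn_mulOp (g : Lp ℝ ∞ μ) (ψ : Lp ℝ 1 μ) :
    mulOp μ g ψ =ᵐ[μ] fun x => g x * ψ x :=
  (ContinuousLinearMap.mul ℝ ℝ).coeFn_holder g ψ

theorem mulOp_mul_mulOp_of_ae_mul_eq_one {g h : Lp ℝ ∞ μ} (hgh : ∀ᵐ x ∂μ, g x * h x = 1) :
    mulOp μ g * mulOp μ h = 1 := by
  ext1 ψ
  apply Lp.ext
  filter_upwards [coeFn_mulOp g (mulOp μ h ψ), coeFn_mulOp h ψ, hgh] with x hg hh hx
  rw [mul_apply_eq_comp, one_apply_eq_self, hg, hh, ← mul_assoc, hx, one_mul]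

noncomputable def mulOpUnit (g h : Lp ℝ ∞ μ) (hgh : ∀ᵐ x ∂μ, g x * h x = 1) :
    (Lp ℝ 1 μ →L[ℝ] Lp ℝ 1 μ)ˣ where
  val := mulOp μ g
  inv := mulOp μ h
  val_inv := mulOp_mul_mulOp_of_ae_mul_eq_one hgh
  inv_val := mulOp_mul_mulOp_of_ae_mul_eq_one (by simpa only [mul_comm] using hgh)

theorem mulOp_semiconjBy {N w : X → ℝ} {K : X → X → ℝ} {g : Lp ℝ ∞ μ} (hg : g =ᵐ[μ] w)
    {T T' : Lp ℝ 1 μ →L[ℝ] Lp ℝ 1 μ}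
    (hT : ∀ ψ : Lp ℝ 1 μ, T ψ =ᵐ[μ] fun x => N x * w x * ∫ σ, K x σ * ψ σ ∂μ)
    (hT' : ∀ ψ : Lp ℝ 1 μ, T' ψ =ᵐ[μ] fun x => N x * ∫ σ, K x σ * (w σ * ψ σ) ∂μ) :
    SemiconjBy (mulOp μ g) T' T := by
  ext1 ψ
  apply Lp.ext
  have hgψ : ∀ x, ∫ σ, K x σ * mulOp μ g ψ σ ∂μ = ∫ σ, K x σ * (w σ * ψ σ) ∂μ := fun x =>
    integral_congr_ae <| by
      filter_upwards [coeFn_mulOp g ψ, hg] with σ hσ hgσ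
      rw [hσ, hgσ]
  filter_upwards [coeFn_mulOp g (T' ψ), hT' ψ, hT (mulOp μ g ψ), hg] with x hgT' hT'x hTx hgx
  rw [mul_apply_eq_comp, mul_apply_eq_comp, hgT', hT'x, hTx, hgψ, hgx]
  ring

end MeasureTheory.L1

theorem S_control_I_control_same_reproduction_number_general
    {n : ℕ} (Ω : Set (Fin n → ℝ))
    (N : (Fin n → ℝ) → ℝ)
    (A : ℝ → (Fin n → ℝ) → (Fin n → ℝ) → ℝ)
    -- the control state φ ∈ L^∞₊(Ω)
    (φ : (Fin n → ℝ) → ℝ) (hφmeas : Measurable φ)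
    (hφnn : ∀ᵐ x ∂(volume.restrict Ω), 0 ≤ φ x)
    (hφbdd : ∃ M, ∀ x, φ x ≤ M)
    -- the S-control and I-control effective next generation operators
    (TS TI : Lp ℝ 1 (volume.restrict Ω) →L[ℝ] Lp ℝ 1 (volume.restrict Ω))
    (hTS : ∀ ψ : Lp ℝ 1 (volume.restrict Ω),
      ⇑(TS ψ) =ᵐ[volume.restrict Ω]
        fun x => N x * Real.exp (-φ x) *
          ∫ σ in Ω, (∫ τ in Ici (0:ℝ), A τ x σ) * ψ σ)
    (hTI : ∀ ψ : Lp ℝ 1 (volume.restrict Ω),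
      ⇑(TI ψ) =ᵐ[volume.restrict Ω]
        fun x => N x *
          ∫ σ in Ω, (∫ τ in Ici (0:ℝ), A τ x σ) * (Real.exp (-φ σ) * ψ σ)) :
    spectralRadius ℝ TS = spectralRadius ℝ TI := by
  obtain ⟨M, hM⟩ := hφbdd
  have hdecay : MemLp (fun x => Real.exp (-φ x)) ∞ (volume.restrict Ω) :=
    memLp_top_of_bound (hφmeas.neg.exp.aestronglyMeasurable) 1 <| by
      filter_upwards [hφnn] with x hx
      simpa [abs_of_pos (Real.exp_pos _)] using hx
  have hgrowth : MemLp (fun x => Real.exp (φ x)) ∞ (volume.restrict Ω) :=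
    memLp_top_of_bound (hφmeas.exp.aestronglyMeasurable) (Real.exp M) <| .of_forall fun x => by
      simpa [abs_of_pos (Real.exp_pos _)] using hM x
  have hinv : ∀ᵐ x ∂(volume.restrict Ω), hdecay.toLp _ x * hgrowth.toLp _ x = 1 := by
    filter_upwards [hdecay.coeFn_toLp, hgrowth.coeFn_toLp] with x h₁ h₂
    rw [h₁, h₂, ← Real.exp_add, neg_add_cancel, Real.exp_zero]
  exact spectralRadius_eq_of_semiconjBy (L1.mulOpUnit _ _ hinv)
    (L1.mulOp_semiconjBy hdecay.coeFn_toLp hTS hTI)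

/-- for every nonnegative `φ ∈ L^∞(Ω)`, the S-control and I-control effective
next generation operators have the same spectral radius: `r(T_S[φ]) = r(T_I[φ])`. -/
theorem S_control_I_control_same_reproduction_number
    {n : ℕ} (Ω : Set (Fin n → ℝ)) (hΩ : MeasurableSet Ω)
    (N : (Fin n → ℝ) → ℝ) (hNmeas : Measurable N) (hNnn : ∀ x, 0 ≤ N x)
    (hNint : IntegrableOn N Ω)
    (hNpos : ∀ᵐ x ∂(volume.restrict Ω), 0 < N x)
    (A : ℝ → (Fin n → ℝ) → (Fin n → ℝ) → ℝ)
    (hAmeas : Measurable (fun p : ℝ × (Fin n → ℝ) × (Fin n → ℝ) => A p.1 p.2.1 p.2.2))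
    (hAnn : ∀ τ x σ, 0 ≤ A τ x σ)
    -- Assumption 1(1), with c ∈ L^∞
    (α : ℝ) (hα : 1 < α)
    (a : (Fin n → ℝ) → ℝ) (b : ℝ → ℝ) (c : (Fin n → ℝ) → ℝ)
    (hameas : Measurable a) (hbmeas : Measurable b) (hcmeas : Measurable c)
    (hann : ∀ x, 0 ≤ a x) (hbnn : ∀ τ, 0 ≤ b τ) (hcnn : ∀ σ, 0 ≤ c σ)
    (haN : IntegrableOn (fun x => a x * N x) Ω)
    (hbint : IntegrableOn b (Ici 0))
    (hcN : IntegrableOn (fun x => c x * N x) Ω)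
    (hc2N : IntegrableOn (fun x => c x ^ 2 * N x) Ω)
    (hcbdd : ∃ M, ∀ x, c x ≤ M)
    (hAbound : ∀ τ ∈ Ici (0:ℝ), ∀ x ∈ Ω, ∀ σ ∈ Ω,
      a x * b τ * c σ ≤ A τ x σ ∧ A τ x σ ≤ α * (a x * b τ * c σ))
    -- the control state φ ∈ L^∞₊(Ω)
    (φ : (Fin n → ℝ) → ℝ) (hφmeas : Measurable φ)
    (hφnn : ∀ᵐ x ∂(volume.restrict Ω), 0 ≤ φ x)
    (hφbdd : ∃ M, ∀ x, φ x ≤ M)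
    -- the S-control and I-control effective next generation operators
    (TS TI : Lp ℝ 1 (volume.restrict Ω) →L[ℝ] Lp ℝ 1 (volume.restrict Ω))
    (hTS : ∀ ψ : Lp ℝ 1 (volume.restrict Ω),
      ⇑(TS ψ) =ᵐ[volume.restrict Ω]
        fun x => N x * Real.exp (-φ x) *
          ∫ σ in Ω, (∫ τ in Ici (0:ℝ), A τ x σ) * ψ σ)
    (hTI : ∀ ψ : Lp ℝ 1 (volume.restrict Ω),
      ⇑(TI ψ) =ᵐ[volume.restrict Ω]
        fun x => N x *
          ∫ σ in Ω, (∫ τ in Ici (0:ℝ), A τ x σ) * (Real.exp (-φ σ) * ψ σ)) :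
    spectralRadius ℝ TS = spectralRadius ℝ TI :=
  S_control_I_control_same_reproduction_number_general Ω N A φ hφmeas hφnn hφbdd TS TI hTS hTI
end

section
/- Let Ω = [0,∞) and suppose Assumptions 1(1) and 2 hold. If W_∞ ∈ Y is nonnegative, nonzero, and satisfies the final size inequality W_∞(x) ≥ ∫_Ω Θ(x,σ)N(σ)(1 − e^{−W_∞(σ)}) dσ for a.e. x (in particular if W_∞ = H_∞ + Ψ(W_∞) with H_∞ ≥ 0), then the final reproduction number satisfies R_S[W_∞] := r(T_S[W_∞]) < 1, where (T_S[W_∞]ψ)(x) = N(x)e^{−W_∞(x)}∫_Ω Θ(x,σ)ψ(σ) dσ on L¹(Ω). -/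
open MeasureTheory Set Filter
open scoped ENNReal

/-!
Write `w = N e^{-W}` for the weight of `T = T_S[W]`, `u = w W` and `m = w L a`. In the final size
inequality split `N (1 - e^{-W}) = u + N (1 - e^{-W} (1 + W))`; the second term is nonnegative and
not a.e. zero, so the lower kernel bound `Θ(x, σ) ≥ L a(x) c(σ)` turns the inequality into
`T u ≤ u - ρ m` with `ρ > 0`, while the upper bound `Θ ≤ α L a ⊗ c` gives `T g ≤ α (∫ c g) m` for
every `g ≥ 0`. Hence `v = u + s m` satisfies `T v ≤ θ v` for some `s > 0` and `θ < 1`. As `T` maps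
the unit ball of `L¹` into a multiple of the order interval `[-v, v]`, `‖T^{n+1}‖ ≤ C θ^n`; since
`|λ|^{n+1} ≤ ‖T^{n+1}‖` for `λ` in the spectrum, `r(T) ≤ θ < 1`.
-/

theorem le_of_forall_pow_succ_le_mul_pow {x θ C : ℝ} (hθ : 0 < θ)
    (h : ∀ n : ℕ, x ^ (n + 1) ≤ C * θ ^ n) : x ≤ θ := by
  by_contra! hθx
  have hx : 0 < x := hθ.trans hθx
  obtain ⟨n, hn⟩ := pow_unbounded_of_one_lt (C / x) ((one_lt_div hθ).2 hθx)
  have hCx : C < x * (x / θ) ^ n := by rwa [div_lt_iff₀' hx] at hn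
  have : C * θ ^ n < x ^ (n + 1) :=
    calc C * θ ^ n < x * (x / θ) ^ n * θ ^ n := by gcongr
      _ = x ^ (n + 1) := by rw [mul_assoc, ← mul_pow, div_mul_cancel₀ _ hθ.ne', pow_succ']
  exact this.not_ge (h n)

theorem exp_neg_mul_one_add_le_one (y : ℝ) : Real.exp (-y) * (1 + y) ≤ 1 := by
  calc Real.exp (-y) * (1 + y) ≤ Real.exp (-y) * Real.exp y := by
        gcongr; linarith [Real.add_one_le_exp y]
    _ = 1 := by rw [← Real.exp_add, neg_add_cancel, Real.exp_zero]

theorem exp_neg_mul_one_add_lt_one {y : ℝ} (hy : y ≠ 0) : Real.exp (-y) * (1 + y) < 1 := by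
  calc Real.exp (-y) * (1 + y) < Real.exp (-y) * Real.exp y := by
        gcongr; linarith [Real.add_one_lt_exp hy]
    _ = 1 := by rw [← Real.exp_add, neg_add_cancel, Real.exp_zero]

-- The scalar core of `T v ≤ θ v` for `v = u + s m`, with `Q = T u` and `Q' = T m`.
theorem exists_contraction_constants {ρ G G' : ℝ} (hρ : 0 < ρ) (hG : 0 ≤ G) (hG' : 0 ≤ G') :
    ∃ θ s : ℝ, 0 < θ ∧ θ < 1 ∧ 0 < s ∧ ∀ U m Q Q' : ℝ, 0 ≤ m → Q ≤ U - ρ * m → Q ≤ G * m →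
      Q' ≤ G' * m → Q + s * Q' ≤ θ * (U + s * m) := by
  obtain ⟨ε, hε0, hε, hεG⟩ : ∃ ε : ℝ, 0 < ε ∧ ε ≤ 1 / 2 ∧ ε * G ≤ ρ / 4 :=
    ⟨ρ / (2 * ρ + 4 * G), by positivity, by rw [div_le_iff₀ (by positivity)]; linarith,
      by rw [div_mul_eq_mul_div, div_le_iff₀ (by positivity)]; nlinarith⟩
  obtain ⟨s, hs0, hsG⟩ : ∃ s : ℝ, 0 < s ∧ s * G' ≤ ρ / 4 :=
    ⟨ρ / (4 * G' + 1), by positivity,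
      by rw [div_mul_eq_mul_div, div_le_iff₀ (by positivity)]; nlinarith⟩
  refine ⟨1 - ε, s, by linarith, by linarith, hs0, fun U m Q Q' hm h1 h2 h3 => ?_⟩
  nlinarith [mul_le_mul_of_nonneg_left h1 (by linarith : (0:ℝ) ≤ 1 - ε),
    mul_le_mul_of_nonneg_left h2 hε0.le, mul_le_mul_of_nonneg_left h3 hs0.le,
    mul_le_mul_of_nonneg_right hεG hm, mul_le_mul_of_nonneg_right hsG hm,
    mul_nonneg (by linarith : (0:ℝ) ≤ 1 / 2 - ε) (mul_nonneg hρ.le hm),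
    mul_nonneg (by linarith : (0:ℝ) ≤ 1 - ε) (mul_nonneg hs0.le hm)]

theorem spectralRadius_le_of_norm_pow_succ_le {𝕜 A : Type*} [NormedField 𝕜] [NormedRing A]
    [NormedAlgebra 𝕜 A] [CompleteSpace A] {a : A} {C θ : ℝ} (hθ : 0 < θ)
    (h : ∀ n : ℕ, ‖a ^ (n + 1)‖ ≤ C * θ ^ n) : spectralRadius 𝕜 a ≤ ENNReal.ofReal θ := by
  refine iSup₂_le fun k hk => ?_
  have hk_le : ‖k‖ ≤ θ := le_of_forall_pow_succ_le_mul_pow (C := C * ‖(1 : A)‖) hθ fun n =>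
    calc ‖k‖ ^ (n + 1) = ‖k ^ (n + 1)‖ := (norm_pow k _).symm
      _ ≤ ‖a ^ (n + 1)‖ * ‖(1 : A)‖ :=
        spectrum.norm_le_norm_mul_of_mem (spectrum.pow_image_subset a _ ⟨k, hk, rfl⟩)
      _ ≤ C * θ ^ n * ‖(1 : A)‖ := by gcongr; exact h n
      _ = C * ‖(1 : A)‖ * θ ^ n := by ring
  rw [← ENNReal.ofReal_coe_nnreal, coe_nnnorm]
  exact ENNReal.ofReal_le_ofReal hk_le

section KernelOperator

variable {X : Type*} [MeasurableSpace X] {μ : Measure X}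

theorem aemeasurable_of_mul_of_ae_pos {f N : X → ℝ} (hfN : AEMeasurable (fun x => f x * N x) μ)
    (hN : AEMeasurable N μ) (hpos : ∀ᵐ x ∂μ, 0 < N x) : AEMeasurable f μ :=
  (hfN.div hN).congr (hpos.mono fun x hx => mul_div_cancel_right₀ (f x) hx.ne')

theorem integral_le_mul_integral_of_ae_le {f b : X → ℝ} {q : ℝ} (hf : Integrable f μ)
    (hb : Integrable b μ) (h : ∀ᵐ σ ∂μ, f σ ≤ q * b σ) :
    ∫ σ, f σ ∂μ ≤ q * ∫ σ, b σ ∂μ := by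
  rw [← integral_const_mul]
  exact integral_mono_ae hf (hb.const_mul q) h

theorem mul_integral_le_integral_of_ae_le {f b : X → ℝ} {p : ℝ} (hf : Integrable f μ)
    (hb : Integrable b μ) (h : ∀ᵐ σ ∂μ, p * b σ ≤ f σ) :
    p * ∫ σ, b σ ∂μ ≤ ∫ σ, f σ ∂μ := by
  rw [← integral_const_mul]
  exact integral_mono_ae (hb.const_mul p) hf h

theorem abs_integral_mul_le_mul_norm {f : X → ℝ} {B : ℝ} (hf0 : ∀ σ, 0 ≤ f σ)
    (hfB : ∀ᵐ σ ∂μ, f σ ≤ B) (ψ : Lp ℝ 1 μ) : |∫ σ, f σ * ψ σ ∂μ| ≤ B * ‖ψ‖ := by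
  rw [L1.norm_eq_integral_norm, ← integral_const_mul]
  refine abs_integral_le_integral_abs.trans (integral_mono_of_nonneg
    (ae_of_all _ fun _ => abs_nonneg _) ((L1.integrable_coeFn ψ).norm.const_mul B) ?_)
  filter_upwards [hfB] with σ hσ
  rw [abs_mul, abs_of_nonneg (hf0 σ), Real.norm_eq_abs]
  exact mul_le_mul_of_nonneg_right hσ (abs_nonneg _)

theorem abs_integral_mul_le_of_abs_le {f ψ v : X → ℝ} {t : ℝ} (hf0 : ∀ σ, 0 ≤ f σ)
    (hfv : Integrable (fun σ => f σ * v σ) μ) (hψ : ∀ᵐ σ ∂μ, |ψ σ| ≤ t * v σ) :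
    |∫ σ, f σ * ψ σ ∂μ| ≤ t * ∫ σ, f σ * v σ ∂μ := by
  rw [← integral_const_mul]
  refine abs_integral_le_integral_abs.trans (integral_mono_of_nonneg
    (ae_of_all _ fun _ => abs_nonneg _) (hfv.const_mul t) ?_)
  filter_upwards [hψ] with σ hσ
  rw [abs_mul, abs_of_nonneg (hf0 σ)]
  calc f σ * |ψ σ| ≤ f σ * (t * v σ) := mul_le_mul_of_nonneg_left hσ (hf0 σ)
    _ = t * (f σ * v σ) := by ring

theorem abs_pow_apply_le_of_abs_le (T : Lp ℝ 1 μ →L[ℝ] Lp ℝ 1 μ) {v : X → ℝ} {θ : ℝ} (hθ : 0 ≤ θ)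
    (hT : ∀ (ψ : Lp ℝ 1 μ) (t : ℝ), 0 ≤ t → (∀ᵐ x ∂μ, |ψ x| ≤ t * v x) →
      ∀ᵐ x ∂μ, |T ψ x| ≤ θ * t * v x)
    (n : ℕ) (ψ : Lp ℝ 1 μ) {t : ℝ} (ht : 0 ≤ t) (hψ : ∀ᵐ x ∂μ, |ψ x| ≤ t * v x) :
    ∀ᵐ x ∂μ, |(T ^ n) ψ x| ≤ θ ^ n * t * v x := by
  induction n generalizing ψ t with
  | zero => simpa using hψ
  | succ n ih =>
    rw [pow_succ, mul_apply_eq_comp]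
    filter_upwards [ih (T ψ) (mul_nonneg hθ ht) (hT ψ t ht hψ)] with x hx
    exact hx.trans_eq (by ring)

theorem norm_pow_succ_le_of_abs_le (T : Lp ℝ 1 μ →L[ℝ] Lp ℝ 1 μ) {v : X → ℝ}
    (hv : Integrable v μ) (hv0 : 0 ≤ᵐ[μ] v) {C θ : ℝ} (hC : 0 ≤ C) (hθ : 0 ≤ θ)
    (hbound : ∀ ψ : Lp ℝ 1 μ, ∀ᵐ x ∂μ, |T ψ x| ≤ C * ‖ψ‖ * v x)
    (hT : ∀ (ψ : Lp ℝ 1 μ) (t : ℝ), 0 ≤ t → (∀ᵐ x ∂μ, |ψ x| ≤ t * v x) →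
      ∀ᵐ x ∂μ, |T ψ x| ≤ θ * t * v x)
    (n : ℕ) : ‖T ^ (n + 1)‖ ≤ C * (∫ x, v x ∂μ) * θ ^ n := by
  have hV : 0 ≤ ∫ x, v x ∂μ := integral_nonneg_of_ae hv0
  refine ContinuousLinearMap.opNorm_le_bound _ (by positivity) fun ψ => ?_
  have hpow := abs_pow_apply_le_of_abs_le T hθ hT n (T ψ) (by positivity) (hbound ψ)
  rw [pow_succ, mul_apply_eq_comp, L1.norm_eq_integral_norm]
  calc ∫ x, ‖(T ^ n) (T ψ) x‖ ∂μ ≤ ∫ x, θ ^ n * (C * ‖ψ‖) * v x ∂μ :=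
        integral_mono_of_nonneg (ae_of_all _ fun _ => norm_nonneg _)
          (hv.const_mul _) (hpow.mono fun _ hx => (Real.norm_eq_abs _).trans_le hx)
    _ = C * (∫ x, v x ∂μ) * θ ^ n * ‖ψ‖ := by rw [integral_const_mul]; ring

theorem spectralRadius_le_of_abs_le (T : Lp ℝ 1 μ →L[ℝ] Lp ℝ 1 μ) {v : X → ℝ}
    (hv : Integrable v μ) (hv0 : 0 ≤ᵐ[μ] v) {C θ : ℝ} (hC : 0 ≤ C) (hθ : 0 < θ)
    (hbound : ∀ ψ : Lp ℝ 1 μ, ∀ᵐ x ∂μ, |T ψ x| ≤ C * ‖ψ‖ * v x)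
    (hT : ∀ (ψ : Lp ℝ 1 μ) (t : ℝ), 0 ≤ t → (∀ᵐ x ∂μ, |ψ x| ≤ t * v x) →
      ∀ᵐ x ∂μ, |T ψ x| ≤ θ * t * v x) :
    spectralRadius ℝ T ≤ ENNReal.ofReal θ :=
  spectralRadius_le_of_norm_pow_succ_le hθ (norm_pow_succ_le_of_abs_le T hv hv0 hC hθ.le hbound hT)

theorem ae_ae_le_mul_const_of_le_mul {K : X → X → ℝ} {k c : X → ℝ} {β M : ℝ} (hβ : 0 ≤ β)
    (hk0 : ∀ x, 0 ≤ k x) (hcM : ∀ σ, c σ ≤ M)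
    (hKle : ∀ᵐ x ∂μ, ∀ᵐ σ ∂μ, K x σ ≤ β * (k x * c σ)) :
    ∀ᵐ x ∂μ, ∀ᵐ σ ∂μ, K x σ ≤ β * k x * M := by
  filter_upwards [hKle] with x hx
  filter_upwards [hx] with σ hσ
  rw [mul_assoc]
  exact hσ.trans (mul_le_mul_of_nonneg_left (mul_le_mul_of_nonneg_left (hcM σ) (hk0 x)) hβ)

theorem ae_integrable_kernel_mul {K : X → X → ℝ} {B : X → ℝ} (hK0 : ∀ x σ, 0 ≤ K x σ)
    (hKmeas : ∀ x, AEStronglyMeasurable (K x) μ) (hKB : ∀ᵐ x ∂μ, ∀ᵐ σ ∂μ, K x σ ≤ B x) :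
    ∀ᵐ x ∂μ, ∀ g, Integrable g μ → Integrable (fun σ => K x σ * g σ) μ := by
  filter_upwards [hKB] with x hx g hg
  exact hg.bdd_mul (hKmeas x) (hx.mono fun σ hσ => (Real.norm_of_nonneg (hK0 x σ)).trans_le hσ)

theorem ae_mul_integral_kernel_le {K : X → X → ℝ} {w k c g : X → ℝ} {β : ℝ}
    (hKle : ∀ᵐ x ∂μ, ∀ᵐ σ ∂μ, K x σ ≤ β * (k x * c σ))
    (hw0 : ∀ x, 0 ≤ w x) (hKg : ∀ᵐ x ∂μ, Integrable (fun σ => K x σ * g σ) μ)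
    (hcg : Integrable (fun σ => c σ * g σ) μ) (hg0 : 0 ≤ᵐ[μ] g) :
    ∀ᵐ x ∂μ, w x * ∫ σ, K x σ * g σ ∂μ ≤ (β * ∫ σ, c σ * g σ ∂μ) * (w x * k x) := by
  filter_upwards [hKle, hKg] with x hx hxg
  have hKg_le : ∀ᵐ σ ∂μ, K x σ * g σ ≤ β * k x * (c σ * g σ) := by
    filter_upwards [hx, hg0] with σ hσ hgσ
    exact (mul_le_mul_of_nonneg_right hσ hgσ).trans_eq (by ring)
  calc w x * ∫ σ, K x σ * g σ ∂μ ≤ w x * (β * k x * ∫ σ, c σ * g σ ∂μ) :=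
        mul_le_mul_of_nonneg_left (integral_le_mul_integral_of_ae_le hxg hcg hKg_le) (hw0 x)
    _ = (β * ∫ σ, c σ * g σ ∂μ) * (w x * k x) := by ring

def IsWeightedKernelOperator (T : Lp ℝ 1 μ →L[ℝ] Lp ℝ 1 μ) (w : X → ℝ) (K : X → X → ℝ) : Prop :=
  ∀ ψ : Lp ℝ 1 μ, T ψ =ᵐ[μ] fun x => w x * ∫ σ, K x σ * ψ σ ∂μ

theorem IsWeightedKernelOperator.abs_apply_le_mul_norm {T : Lp ℝ 1 μ →L[ℝ] Lp ℝ 1 μ}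
    {K : X → X → ℝ} {w B : X → ℝ} (hT : IsWeightedKernelOperator T w K)
    (hK0 : ∀ x σ, 0 ≤ K x σ) (hw0 : ∀ x, 0 ≤ w x) (hKB : ∀ᵐ x ∂μ, ∀ᵐ σ ∂μ, K x σ ≤ B x)
    (ψ : Lp ℝ 1 μ) : ∀ᵐ x ∂μ, |T ψ x| ≤ w x * B x * ‖ψ‖ := by
  filter_upwards [hT ψ, hKB] with x hx hxB
  rw [hx, abs_mul, abs_of_nonneg (hw0 x), mul_assoc]
  exact mul_le_mul_of_nonneg_left (abs_integral_mul_le_mul_norm (hK0 x) hxB ψ) (hw0 x)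

theorem IsWeightedKernelOperator.abs_apply_le_of_abs_le {T : Lp ℝ 1 μ →L[ℝ] Lp ℝ 1 μ}
    {K : X → X → ℝ} {w v : X → ℝ} {θ : ℝ} (hT : IsWeightedKernelOperator T w K)
    (hK0 : ∀ x σ, 0 ≤ K x σ) (hw0 : ∀ x, 0 ≤ w x)
    (hKv : ∀ᵐ x ∂μ, Integrable (fun σ => K x σ * v σ) μ)
    (hTv : ∀ᵐ x ∂μ, w x * ∫ σ, K x σ * v σ ∂μ ≤ θ * v x)
    (ψ : Lp ℝ 1 μ) (t : ℝ) (ht : 0 ≤ t) (hψ : ∀ᵐ x ∂μ, |ψ x| ≤ t * v x) :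
    ∀ᵐ x ∂μ, |T ψ x| ≤ θ * t * v x := by
  filter_upwards [hT ψ, hKv, hTv] with x hx hxv hxθ
  rw [hx, abs_mul, abs_of_nonneg (hw0 x)]
  calc w x * |∫ σ, K x σ * ψ σ ∂μ| ≤ w x * (t * ∫ σ, K x σ * v σ ∂μ) :=
        mul_le_mul_of_nonneg_left (abs_integral_mul_le_of_abs_le (hK0 x) hxv hψ) (hw0 x)
    _ = t * (w x * ∫ σ, K x σ * v σ ∂μ) := by ring
    _ ≤ t * (θ * v x) := mul_le_mul_of_nonneg_left hxθ ht
    _ = θ * t * v x := by ring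

theorem spectralRadius_lt_one_of_strict_subsolution {T : Lp ℝ 1 μ →L[ℝ] Lp ℝ 1 μ}
    {K : X → X → ℝ} {w k c u : X → ℝ} {β M ρ : ℝ} (hT : IsWeightedKernelOperator T w K)
    (hK0 : ∀ x σ, 0 ≤ K x σ) (hKmeas : ∀ x, AEStronglyMeasurable (K x) μ)
    (hKle : ∀ᵐ x ∂μ, ∀ᵐ σ ∂μ, K x σ ≤ β * (k x * c σ)) (hβ : 0 ≤ β) (hk0 : ∀ x, 0 ≤ k x)
    (hc : AEStronglyMeasurable c μ) (hc0 : ∀ σ, 0 ≤ c σ) (hcM : ∀ σ, c σ ≤ M) (hM : 0 ≤ M)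
    (hw0 : ∀ x, 0 ≤ w x) (hwk : Integrable (fun x => w x * k x) μ)
    (hu : Integrable u μ) (hu0 : 0 ≤ᵐ[μ] u) (hρ : 0 < ρ)
    (hsub : ∀ᵐ x ∂μ, w x * ∫ σ, K x σ * u σ ∂μ ≤ u x - ρ * (w x * k x)) :
    spectralRadius ℝ T < 1 := by
  set m : X → ℝ := fun x => w x * k x
  have hm0 : ∀ x, 0 ≤ m x := fun x => mul_nonneg (hw0 x) (hk0 x)
  have hKB := ae_ae_le_mul_const_of_le_mul hβ hk0 hcM hKle
  have hKint := ae_integrable_kernel_mul hK0 hKmeas hKB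
  have hcint : ∀ g, Integrable g μ → Integrable (fun σ => c σ * g σ) μ := fun g hg =>
    hg.bdd_mul hc (ae_of_all _ fun σ => (Real.norm_of_nonneg (hc0 σ)).trans_le (hcM σ))
  have hupper : ∀ g, Integrable g μ → 0 ≤ᵐ[μ] g →
      ∀ᵐ x ∂μ, w x * ∫ σ, K x σ * g σ ∂μ ≤ (β * ∫ σ, c σ * g σ ∂μ) * m x := fun g hg hg0 =>
    ae_mul_integral_kernel_le hKle hw0 (hKint.mono fun x hx => hx g hg) (hcint g hg) hg0
  have hG : ∀ g, 0 ≤ᵐ[μ] g → 0 ≤ β * ∫ σ, c σ * g σ ∂μ := fun g hg0 =>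
    mul_nonneg hβ (integral_nonneg_of_ae (hg0.mono fun σ hσ => mul_nonneg (hc0 σ) hσ))
  obtain ⟨θ, s, hθ0, hθ1, hs, hθs⟩ :=
    exists_contraction_constants hρ (hG u hu0) (hG m (ae_of_all _ hm0))
  set v : X → ℝ := fun x => u x + s * m x
  have hv : Integrable v μ := hu.add (hwk.const_mul s)
  have hv0 : 0 ≤ᵐ[μ] v := hu0.mono fun x hx => add_nonneg hx (mul_nonneg hs.le (hm0 x))
  have hTv : ∀ᵐ x ∂μ, w x * ∫ σ, K x σ * v σ ∂μ ≤ θ * v x := by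
    filter_upwards [hsub, hupper u hu hu0, hupper m hwk (ae_of_all _ hm0), hKint]
      with x hxρ hxu hxm hxint
    have hsplit : ∫ σ, K x σ * v σ ∂μ = ∫ σ, K x σ * u σ ∂μ + s * ∫ σ, K x σ * m σ ∂μ := by
      rw [← integral_const_mul, ← integral_add (hxint u hu) ((hxint m hwk).const_mul s)]
      exact integral_congr_ae (ae_of_all _ fun σ => by ring)
    calc w x * ∫ σ, K x σ * v σ ∂μ
        = w x * ∫ σ, K x σ * u σ ∂μ + s * (w x * ∫ σ, K x σ * m σ ∂μ) := by rw [hsplit]; ring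
      _ ≤ θ * (u x + s * m x) := hθs _ _ _ _ (hm0 x) hxρ hxu hxm
  have hbound : ∀ ψ : Lp ℝ 1 μ, ∀ᵐ x ∂μ, |T ψ x| ≤ β * M / s * ‖ψ‖ * v x := by
    intro ψ
    filter_upwards [hT.abs_apply_le_mul_norm hK0 hw0 hKB ψ, hu0] with x hx hux
    calc |T ψ x| ≤ w x * (β * k x * M) * ‖ψ‖ := hx
      _ = β * M / s * ‖ψ‖ * (s * m x) := by field_simp; ring
      _ ≤ β * M / s * ‖ψ‖ * v x := by gcongr; exact le_add_of_nonneg_left hux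
  refine (spectralRadius_le_of_abs_le T hv hv0 (by positivity) hθ0 hbound
    (hT.abs_apply_le_of_abs_le hK0 hw0 (hKint.mono fun x hx => hx v hv) hTv)).trans_lt ?_
  exact ENNReal.ofReal_lt_one.2 hθ1

theorem mul_one_sub_exp_neg_mul_one_add_not_ae_eq_zero {N W : X → ℝ}
    (hNpos : ∀ᵐ x ∂μ, 0 < N x) (hWne : ¬ W =ᵐ[μ] 0) :
    ¬ (fun x => N x * (1 - Real.exp (-W x) * (1 + W x))) =ᵐ[μ] 0 := by
  refine fun h => hWne ?_
  filter_upwards [h, hNpos] with x hx hNx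
  by_contra hWx
  exact (mul_pos hNx (sub_pos.2 (exp_neg_mul_one_add_lt_one hWx))).ne' hx

theorem ae_mul_integral_kernel_le_of_final_size {K : X → X → ℝ} {k c N W : X → ℝ}
    (hKint : ∀ᵐ x ∂μ, ∀ g, Integrable g μ → Integrable (fun σ => K x σ * g σ) μ)
    (hKge : ∀ᵐ x ∂μ, ∀ᵐ σ ∂μ, k x * c σ ≤ K x σ) (hN0 : ∀ x, 0 ≤ N x)
    (hu : Integrable (fun σ => N σ * Real.exp (-W σ) * W σ) μ)
    (hφ : Integrable (fun σ => N σ * (1 - Real.exp (-W σ) * (1 + W σ))) μ)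
    (hcφ : Integrable (fun σ => c σ * (N σ * (1 - Real.exp (-W σ) * (1 + W σ)))) μ)
    (hfinal : ∀ᵐ x ∂μ, ∫ σ, K x σ * N σ * (1 - Real.exp (-W σ)) ∂μ ≤ W x) :
    ∀ᵐ x ∂μ, N x * Real.exp (-W x) * ∫ σ, K x σ * (N σ * Real.exp (-W σ) * W σ) ∂μ ≤
      N x * Real.exp (-W x) * W x - (∫ σ, c σ * (N σ * (1 - Real.exp (-W σ) * (1 + W σ))) ∂μ) *
        (N x * Real.exp (-W x) * k x) := by
  filter_upwards [hKint, hKge, hfinal] with x hxint hxge hx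
  set φ : X → ℝ := fun σ => N σ * (1 - Real.exp (-W σ) * (1 + W σ))
  have hsplit : ∫ σ, K x σ * N σ * (1 - Real.exp (-W σ)) ∂μ =
      ∫ σ, K x σ * (N σ * Real.exp (-W σ) * W σ) ∂μ + ∫ σ, K x σ * φ σ ∂μ := by
    rw [← integral_add (hxint _ hu) (hxint _ hφ)]
    exact integral_congr_ae (ae_of_all _ fun σ => by ring)
  have hφ0 : ∀ σ, 0 ≤ φ σ := fun σ =>
    mul_nonneg (hN0 σ) (sub_nonneg.2 (exp_neg_mul_one_add_le_one _))
  have hlower : k x * ∫ σ, c σ * φ σ ∂μ ≤ ∫ σ, K x σ * φ σ ∂μ :=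
    mul_integral_le_integral_of_ae_le (hxint _ hφ) hcφ (hxge.mono fun σ hσ =>
      (mul_le_mul_of_nonneg_right hσ (hφ0 σ)).trans_eq' (by ring))
  calc N x * Real.exp (-W x) * ∫ σ, K x σ * (N σ * Real.exp (-W σ) * W σ) ∂μ
      ≤ N x * Real.exp (-W x) * (W x - k x * ∫ σ, c σ * φ σ ∂μ) := by
        gcongr
        · exact mul_nonneg (hN0 x) (Real.exp_pos _).le
        · linarith
    _ = _ := by ring

theorem spectralRadius_lt_one_of_final_size {T : Lp ℝ 1 μ →L[ℝ] Lp ℝ 1 μ}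
    {K : X → X → ℝ} {k c N W : X → ℝ} {β M : ℝ}
    (hT : IsWeightedKernelOperator T (fun x => N x * Real.exp (-W x)) K)
    (hK0 : ∀ x σ, 0 ≤ K x σ) (hKmeas : ∀ x, AEStronglyMeasurable (K x) μ)
    (hK : ∀ᵐ x ∂μ, ∀ᵐ σ ∂μ, k x * c σ ≤ K x σ ∧ K x σ ≤ β * (k x * c σ)) (hβ : 0 ≤ β)
    (hk0 : ∀ x, 0 ≤ k x) (hkN : Integrable (fun x => k x * N x) μ)
    (hc : AEStronglyMeasurable c μ) (hc0 : ∀ σ, 0 ≤ c σ) (hcM : ∀ σ, c σ ≤ M) (hM : 0 ≤ M)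
    (hcpos : ∀ φ : X → ℝ, Integrable φ μ → (∀ᵐ x ∂μ, 0 ≤ φ x) → ¬ φ =ᵐ[μ] 0 →
      0 < ∫ x, c x * φ x ∂μ)
    (hN0 : ∀ x, 0 ≤ N x) (hN : Integrable N μ) (hNpos : ∀ᵐ x ∂μ, 0 < N x)
    (hW : AEMeasurable W μ) (hWN : Integrable (fun x => W x * N x) μ)
    (hW0 : ∀ᵐ x ∂μ, 0 ≤ W x) (hWne : ¬ W =ᵐ[μ] 0)
    (hfinal : ∀ᵐ x ∂μ, ∫ σ, K x σ * N σ * (1 - Real.exp (-W σ)) ∂μ ≤ W x) :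
    spectralRadius ℝ T < 1 := by
  have hKle : ∀ᵐ x ∂μ, ∀ᵐ σ ∂μ, K x σ ≤ β * (k x * c σ) :=
    hK.mono fun _ hx => hx.mono fun _ h => h.2
  have hKint := ae_integrable_kernel_mul hK0 hKmeas (ae_ae_le_mul_const_of_le_mul hβ hk0 hcM hKle)
  have hexp : AEStronglyMeasurable (fun x => Real.exp (-W x)) μ := hW.neg.exp.aestronglyMeasurable
  have hexp_le : ∀ᵐ x ∂μ, ‖Real.exp (-W x)‖ ≤ 1 := hW0.mono fun x hx => by
    rw [Real.norm_of_nonneg (Real.exp_pos _).le, Real.exp_le_one_iff]; linarith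
  have hu : Integrable (fun σ => N σ * Real.exp (-W σ) * W σ) μ :=
    (hWN.mul_bdd hexp hexp_le).congr (ae_of_all _ fun σ => by ring)
  have hwk : Integrable (fun x => N x * Real.exp (-W x) * k x) μ :=
    (hkN.mul_bdd hexp hexp_le).congr (ae_of_all _ fun σ => by ring)
  have hφ : Integrable (fun σ => N σ * (1 - Real.exp (-W σ) * (1 + W σ))) μ := by
    refine hN.mul_bdd (c := 1) (aestronglyMeasurable_const.sub
      (hexp.mul (aestronglyMeasurable_const.add hW.aestronglyMeasurable))) (hW0.mono fun σ hσ => ?_)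
    have h0 : 0 ≤ Real.exp (-W σ) * (1 + W σ) := mul_nonneg (Real.exp_pos _).le (by linarith)
    rw [Real.norm_of_nonneg (sub_nonneg.2 (exp_neg_mul_one_add_le_one _))]
    linarith
  have hφ0 : ∀ σ, 0 ≤ N σ * (1 - Real.exp (-W σ) * (1 + W σ)) := fun σ =>
    mul_nonneg (hN0 σ) (sub_nonneg.2 (exp_neg_mul_one_add_le_one _))
  have hcφ := hφ.bdd_mul hc (ae_of_all _ fun σ => (Real.norm_of_nonneg (hc0 σ)).trans_le (hcM σ))
  exact spectralRadius_lt_one_of_strict_subsolution hT hK0 hKmeas hKle hβ hk0 hc hc0 hcM hM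
    (fun x => mul_nonneg (hN0 x) (Real.exp_pos _).le) hwk hu
    (hW0.mono fun x hx => mul_nonneg (mul_nonneg (hN0 x) (Real.exp_pos _).le) hx)
    (hcpos _ hφ (ae_of_all _ hφ0) (mul_one_sub_exp_neg_mul_one_add_not_ae_eq_zero hNpos hWne))
    (ae_mul_integral_kernel_le_of_final_size hKint (hK.mono fun _ hx => hx.mono fun _ h => h.1)
      hN0 hu hφ hcφ hfinal)

end KernelOperator

theorem measurable_integral_kernel {T X : Type*} [MeasurableSpace T] [MeasurableSpace X]
    {A : T → X → X → ℝ} {ν : Measure T} [SFinite ν]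
    (hAmeas : Measurable (fun p : T × X × X => A p.1 p.2.1 p.2.2)) (x : X) :
    Measurable fun σ => ∫ τ, A τ x σ ∂ν :=
  (StronglyMeasurable.integral_prod_right (f := fun σ τ => A τ x σ)
    (hAmeas.comp (measurable_snd.prodMk (measurable_const.prodMk measurable_fst))
      ).stronglyMeasurable).measurable

theorem ae_setIntegral_kernel_bounds {A : ℝ → ℝ → ℝ → ℝ} {a b c : ℝ → ℝ} {α : ℝ} {s : Set ℝ}
    (hAmeas : Measurable (fun p : ℝ × ℝ × ℝ => A p.1 p.2.1 p.2.2)) (hAnn : ∀ τ x σ, 0 ≤ A τ x σ)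
    (hs : MeasurableSet s) (hbint : IntegrableOn b s)
    (hAbound : ∀ τ ∈ s, ∀ x ∈ s, ∀ σ ∈ s,
      a x * b τ * c σ ≤ A τ x σ ∧ A τ x σ ≤ α * (a x * b τ * c σ)) :
    ∀ᵐ x ∂(volume.restrict s), ∀ᵐ σ ∂(volume.restrict s),
      (∫ τ in s, b τ) * a x * c σ ≤ ∫ τ in s, A τ x σ ∧
        ∫ τ in s, A τ x σ ≤ α * ((∫ τ in s, b τ) * a x * c σ) := by
  have hmem : ∀ᵐ y ∂(volume.restrict s), y ∈ s := ae_restrict_mem hs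
  filter_upwards [hmem] with x hx
  filter_upwards [hmem] with σ hσ
  have hbA : ∀ᵐ τ ∂(volume.restrict s),
      (a x * c σ) * b τ ≤ A τ x σ ∧ A τ x σ ≤ (α * (a x * c σ)) * b τ := by
    filter_upwards [hmem] with τ hτ
    obtain ⟨h1, h2⟩ := hAbound τ hτ x hx σ hσ
    constructor <;> linarith
  have hAint : IntegrableOn (fun τ => A τ x σ) s :=
    (hbint.const_mul (α * (a x * c σ))).mono'
      (hAmeas.comp (measurable_id.prodMk (measurable_const (a := (x, σ))))).aestronglyMeasurable
      (hbA.mono fun τ hτ => (Real.norm_of_nonneg (hAnn τ x σ)).trans_le hτ.2)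
  have h1 := mul_integral_le_integral_of_ae_le hAint hbint (hbA.mono fun _ h => h.1)
  have h2 := integral_le_mul_integral_of_ae_le hAint hbint (hbA.mono fun _ h => h.2)
  constructor <;> linarith

theorem final_reproduction_number_lt_one_general
    (N : ℝ → ℝ) (hNnn : ∀ x, 0 ≤ N x)
    (hNint : IntegrableOn N (Ici 0))
    (hNpos : ∀ᵐ x ∂(volume.restrict (Ici (0:ℝ))), 0 < N x)
    (A : ℝ → ℝ → ℝ → ℝ)
    (hAmeas : Measurable (fun p : ℝ × ℝ × ℝ => A p.1 p.2.1 p.2.2))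
    (hAnn : ∀ τ x σ, 0 ≤ A τ x σ)
    -- Assumption 1(1)
    (α : ℝ) (hα : 1 < α)
    (a b c : ℝ → ℝ)
    (hcmeas : Measurable c)
    (hann : ∀ x, 0 ≤ a x) (hbnn : ∀ τ, 0 ≤ b τ) (hcnn : ∀ σ, 0 ≤ c σ)
    (haN : IntegrableOn (fun x => a x * N x) (Ici 0))
    (hbint : IntegrableOn b (Ici 0))
    (hAbound : ∀ τ ∈ Ici (0:ℝ), ∀ x ∈ Ici (0:ℝ), ∀ σ ∈ Ici (0:ℝ),
      a x * b τ * c σ ≤ A τ x σ ∧ A τ x σ ≤ α * (a x * b τ * c σ))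
    -- Assumption 2
    (hcbdd : ∃ M, ∀ x, c x ≤ M)
    (hcpos : ∀ φ : ℝ → ℝ, IntegrableOn φ (Ici 0) →
      (∀ᵐ x ∂(volume.restrict (Ici (0:ℝ))), 0 ≤ φ x) →
      ¬ φ =ᵐ[volume.restrict (Ici (0:ℝ))] 0 →
      0 < ∫ x in Ici (0:ℝ), c x * φ x)
    -- W_∞ ∈ Y₊ nonzero satisfying the final size inequality
    (Winf : ℝ → ℝ)
    (hWY : IntegrableOn (fun x => Winf x * N x) (Ici 0))
    (hWnn : ∀ᵐ x ∂(volume.restrict (Ici (0:ℝ))), 0 ≤ Winf x)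
    (hWne : ¬ Winf =ᵐ[volume.restrict (Ici (0:ℝ))] 0)
    (hWineq : ∀ᵐ x ∂(volume.restrict (Ici (0:ℝ))),
      (∫ σ in Ici (0:ℝ), (∫ τ in Ici (0:ℝ), A τ x σ) * N σ * (1 - Real.exp (-Winf σ)))
        ≤ Winf x)
    -- the effective next generation operator T_S[W_∞] on L¹(Ω)
    (TS : Lp ℝ 1 (volume.restrict (Ici (0:ℝ))) →L[ℝ] Lp ℝ 1 (volume.restrict (Ici (0:ℝ))))
    (hTS : ∀ ψ : Lp ℝ 1 (volume.restrict (Ici (0:ℝ))),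
      ⇑(TS ψ) =ᵐ[volume.restrict (Ici (0:ℝ))]
        fun x => N x * Real.exp (-Winf x) *
          ∫ σ in Ici (0:ℝ), (∫ τ in Ici (0:ℝ), A τ x σ) * ψ σ) :
    spectralRadius ℝ TS < 1 := by
  obtain ⟨M, hcM⟩ := hcbdd
  have hL : 0 ≤ ∫ τ in Ici (0:ℝ), b τ := setIntegral_nonneg measurableSet_Ici fun τ _ => hbnn τ
  exact spectralRadius_lt_one_of_final_size hTS
    (fun x σ => setIntegral_nonneg measurableSet_Ici fun τ _ => hAnn τ x σ)
    (fun x => (measurable_integral_kernel hAmeas x).aestronglyMeasurable)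
    (ae_setIntegral_kernel_bounds hAmeas hAnn measurableSet_Ici hbint hAbound) (by linarith)
    (fun x => mul_nonneg hL (hann x)) (by simpa only [mul_assoc] using haN.const_mul _)
    hcmeas.aestronglyMeasurable hcnn hcM ((hcnn 0).trans (hcM 0)) hcpos hNnn hNint hNpos
    (aemeasurable_of_mul_of_ae_pos hWY.aemeasurable hNint.aemeasurable hNpos) hWY hWnn hWne hWineq

/-- the final reproduction number is subcritical: if `W_∞ ∈ Y₊` is nonzero and
satisfies the final size inequality, then `R_S[W_∞] = r(T_S[W_∞]) < 1`. -/
theorem final_reproduction_number_lt_one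
    (N : ℝ → ℝ) (hNmeas : Measurable N) (hNnn : ∀ x, 0 ≤ N x)
    (hNint : IntegrableOn N (Ici 0))
    (hNpos : ∀ᵐ x ∂(volume.restrict (Ici (0:ℝ))), 0 < N x)
    (A : ℝ → ℝ → ℝ → ℝ)
    (hAmeas : Measurable (fun p : ℝ × ℝ × ℝ => A p.1 p.2.1 p.2.2))
    (hAnn : ∀ τ x σ, 0 ≤ A τ x σ)
    -- Assumption 1(1)
    (α : ℝ) (hα : 1 < α)
    (a b c : ℝ → ℝ)
    (hameas : Measurable a) (hbmeas : Measurable b) (hcmeas : Measurable c)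
    (hann : ∀ x, 0 ≤ a x) (hbnn : ∀ τ, 0 ≤ b τ) (hcnn : ∀ σ, 0 ≤ c σ)
    (haN : IntegrableOn (fun x => a x * N x) (Ici 0))
    (hbint : IntegrableOn b (Ici 0))
    (hcN : IntegrableOn (fun x => c x * N x) (Ici 0))
    (hc2N : IntegrableOn (fun x => c x ^ 2 * N x) (Ici 0))
    (hAbound : ∀ τ ∈ Ici (0:ℝ), ∀ x ∈ Ici (0:ℝ), ∀ σ ∈ Ici (0:ℝ),
      a x * b τ * c σ ≤ A τ x σ ∧ A τ x σ ≤ α * (a x * b τ * c σ))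
    -- Assumption 2
    (haNpos : ∀ f : ℝ → ℝ, Measurable f → (∀ x, 0 ≤ f x) → (∃ M, ∀ x, f x ≤ M) →
      ¬ f =ᵐ[volume.restrict (Ici (0:ℝ))] 0 →
      0 < ∫ x in Ici (0:ℝ), f x * (a x * N x))
    (hcbdd : ∃ M, ∀ x, c x ≤ M)
    (hcpos : ∀ φ : ℝ → ℝ, IntegrableOn φ (Ici 0) →
      (∀ᵐ x ∂(volume.restrict (Ici (0:ℝ))), 0 ≤ φ x) →
      ¬ φ =ᵐ[volume.restrict (Ici (0:ℝ))] 0 →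
      0 < ∫ x in Ici (0:ℝ), c x * φ x)
    (hΘshift : TendstoUniformlyOn
      (fun (h : ℝ) (σ : ℝ) => ∫ x in Ici (0:ℝ),
        |indicator (Ici (0:ℝ)) (fun y => N y * ∫ τ in Ici (0:ℝ), A τ y σ) (x + h)
          - N x * ∫ τ in Ici (0:ℝ), A τ x σ|)
      (fun _ => 0) (nhds (0:ℝ)) (Ici 0))
    -- W_∞ ∈ Y₊ nonzero satisfying the final size inequality
    (Winf : ℝ → ℝ)
    (hWY : IntegrableOn (fun x => Winf x * N x) (Ici 0))
    (hWnn : ∀ᵐ x ∂(volume.restrict (Ici (0:ℝ))), 0 ≤ Winf x)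
    (hWne : ¬ Winf =ᵐ[volume.restrict (Ici (0:ℝ))] 0)
    (hWineq : ∀ᵐ x ∂(volume.restrict (Ici (0:ℝ))),
      (∫ σ in Ici (0:ℝ), (∫ τ in Ici (0:ℝ), A τ x σ) * N σ * (1 - Real.exp (-Winf σ)))
        ≤ Winf x)
    -- the effective next generation operator T_S[W_∞] on L¹(Ω)
    (TS : Lp ℝ 1 (volume.restrict (Ici (0:ℝ))) →L[ℝ] Lp ℝ 1 (volume.restrict (Ici (0:ℝ))))
    (hTS : ∀ ψ : Lp ℝ 1 (volume.restrict (Ici (0:ℝ))),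
      ⇑(TS ψ) =ᵐ[volume.restrict (Ici (0:ℝ))]
        fun x => N x * Real.exp (-Winf x) *
          ∫ σ in Ici (0:ℝ), (∫ τ in Ici (0:ℝ), A τ x σ) * ψ σ) :
    spectralRadius ℝ TS < 1 :=
  final_reproduction_number_lt_one_general N hNnn hNint hNpos A hAmeas hAnn α hα a b c hcmeas hann
    hbnn hcnn haN hbint hAbound hcbdd hcpos Winf hWY hWnn hWne hWineq TS hTS
end

section
/- Let p > 0 and let ω(x) = (p^p/Γ(p)) x^{p−1} e^{−p x} for x > 0 be the Gamma density with mean 1 and variance 1/p. Then for every w ≥ 0: (i) ∫_0^∞ ω(x) e^{−w x} dx = (p/(p+w))^p, (ii) ∫_0^∞ x ω(x) e^{−w x} dx = p^{p+1}/(p+w)^{p+1}, and consequently (iii) ∫_0^∞ x ω(x) e^{−w x} dx = (∫_0^∞ ω(x) e^{−w x} dx)^{(p+1)/p}; that is, the effective reproduction number R₀ ∫_0^∞ x ω(x)e^{−wx} dx equals R₀ s^{1+1/p}, where s = ∫_0^∞ ω(x)e^{−wx} dx is the remaining susceptible fraction and R₀ > 0 is any constant. -/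
/-!
Against `e^{-wx}` the Gamma(a, r) density becomes an unnormalised Gamma(a, r + w) density, so its
Laplace transform is `(r / (r + w))^a`. Since `Γ(a + 1) = a Γ(a)`, multiplying the density by `x`
gives `a / r` times the Gamma(a + 1, r) density, so the first moment against `e^{-wx}` is
`(a / r) (r / (r + w))^(a + 1)`. For `a = r = p` this is `s^{(p+1)/p}` with `s = (p / (p + w))^p`.
-/

open MeasureTheory Set Real ProbabilityTheory

namespace ProbabilityTheory

variable {a r w : ℝ}

lemma setIntegral_gammaPDFReal_mul_exp_neg_mul (ha : 0 < a) (hr : 0 ≤ r) (hrw : 0 < r + w) :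
    ∫ x in Ioi 0, gammaPDFReal a r x * exp (-(w * x)) = (r / (r + w)) ^ a := by
  calc ∫ x in Ioi 0, gammaPDFReal a r x * exp (-(w * x))
      = ∫ x in Ioi 0, r ^ a / Gamma a * (x ^ (a - 1) * exp (-((r + w) * x))) :=
        setIntegral_congr_fun measurableSet_Ioi fun x hx => by
          rw [gammaPDFReal, if_pos (le_of_lt hx), add_mul, neg_add, exp_add]
          ring
    _ = r ^ a / Gamma a * ((1 / (r + w)) ^ a * Gamma a) := by
        rw [integral_const_mul, integral_rpow_mul_exp_neg_mul_Ioi ha hrw]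
    _ = (r / (r + w)) ^ a := by
        rw [div_rpow hr hrw.le, div_rpow zero_le_one hrw.le, one_rpow]
        field_simp [(Gamma_pos_of_pos ha).ne']

lemma mul_gammaPDFReal (ha : 0 < a) (hr : r ≠ 0) (x : ℝ) :
    x * gammaPDFReal a r x = a / r * gammaPDFReal (a + 1) r x := by
  unfold gammaPDFReal
  split_ifs with hx
  · rw [Gamma_add_one ha.ne', add_sub_cancel_right, rpow_add_one hr,
      ← sub_add_cancel a 1, rpow_add_one' hx (by simpa using ha.ne'), sub_add_cancel]
    field_simp
  · rw [mul_zero, mul_zero]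

lemma setIntegral_mul_gammaPDFReal_mul_exp_neg_mul (ha : 0 < a) (hr : 0 < r) (hrw : 0 < r + w) :
    ∫ x in Ioi 0, x * gammaPDFReal a r x * exp (-(w * x)) = a / r * (r / (r + w)) ^ (a + 1) := by
  simp_rw [mul_gammaPDFReal ha hr.ne', mul_assoc]
  rw [integral_const_mul, setIntegral_gammaPDFReal_mul_exp_neg_mul (by linarith) hr.le hrw]

end ProbabilityTheory

/-- moment identities for the Gamma density with shape p and rate p, and the
resulting power-law form of the effective reproduction number R₀ s^{1+1/p}. -/
theorem gamma_density_power_law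
    (p : ℝ) (hp : 0 < p)
    (ω : ℝ → ℝ)
    (hω : ∀ x ∈ Ioi (0:ℝ), ω x = p ^ p / Real.Gamma p * x ^ (p - 1) * Real.exp (-(p * x))) :
    ∀ w : ℝ, 0 ≤ w →
      (∫ x in Ioi (0:ℝ), ω x * Real.exp (-(w * x))) = (p / (p + w)) ^ p ∧
      (∫ x in Ioi (0:ℝ), x * ω x * Real.exp (-(w * x)))
        = p ^ (p + 1) / (p + w) ^ (p + 1) ∧
      (∫ x in Ioi (0:ℝ), x * ω x * Real.exp (-(w * x)))
        = (∫ x in Ioi (0:ℝ), ω x * Real.exp (-(w * x))) ^ ((p + 1) / p) ∧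
      ∀ R₀ : ℝ, 0 < R₀ →
        R₀ * ∫ x in Ioi (0:ℝ), x * ω x * Real.exp (-(w * x))
          = R₀ * (∫ x in Ioi (0:ℝ), ω x * Real.exp (-(w * x))) ^ (1 + 1 / p) := by
  intro w hw
  have hpw : 0 < p + w := by linarith
  have hω_eq : EqOn ω (gammaPDFReal p p) (Ioi 0) := fun x hx => by
    rw [hω x hx, gammaPDFReal, if_pos (le_of_lt hx)]
  have hs : ∫ x in Ioi 0, ω x * exp (-(w * x)) = (p / (p + w)) ^ p := by
    rw [← setIntegral_gammaPDFReal_mul_exp_neg_mul hp hp.le hpw]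
    exact setIntegral_congr_fun measurableSet_Ioi fun x hx => by rw [hω_eq hx]
  have hm : ∫ x in Ioi 0, x * ω x * exp (-(w * x)) = (p / (p + w)) ^ (p + 1) := by
    have hm₁ := setIntegral_mul_gammaPDFReal_mul_exp_neg_mul hp hp hpw
    rw [div_self hp.ne', one_mul] at hm₁
    rw [← hm₁]
    exact setIntegral_congr_fun measurableSet_Ioi fun x hx => by rw [hω_eq hx]
  have hpow : (p / (p + w)) ^ (p + 1) = ((p / (p + w)) ^ p) ^ ((p + 1) / p) := by
    rw [← rpow_mul (by positivity), mul_div_cancel₀ _ hp.ne']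
  refine ⟨hs, by rw [hm, div_rpow hp.le hpw.le], by rw [hm, hs, hpow], fun R₀ _ => ?_⟩
  rw [hm, hs, hpow, one_add_div hp.ne', add_comm]
end

section
/- Let F(w) = L ∫_Ω c(σ)N(σ)(1 − e^{−a(σ)w}) dσ for w ≥ 0, and set R₀ = L ∫_Ω c N a dx. If R₀ > 1, then: (i) F has a unique positive fixed point v > 0 with F(v) = v; (ii) F(w) > w for all 0 < w < v; and (iii) every w > 0 satisfying w ≥ F(w) (in particular any solution of w = Q_∞ + F(w) with Q_∞ ≥ 0 and w > 0) satisfies w ≥ v, so that the final size obeys 1 − e^{−a(x)w} ≥ 1 − e^{−a(x)v} for all x. -/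
/-!
Write `φ(t) = 1 - e^{-t}`. Since `φ` is strictly concave with `φ(0) = 0`, the ratio `φ(t)/t` is
strictly decreasing on `t > 0`; integrating against the weight `c N`, which charges the set
`{c N a > 0}`, shows that `F(w)/w` is strictly decreasing on `w > 0`. Fixed points of `F` are the
solutions of `F(w)/w = 1`, so there is at most one, with `F(w) > w` before it and `F(w) < w` after
it. One exists by the intermediate value theorem: `F` is continuous and bounded by `L ∫ c N`, while
`t e^{-t} ≤ φ(t)` gives `F(w) ≥ w · L ∫ c N a e^{-a w}`, whose last factor tends to `R₀ > 1` as
`w → 0`.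
-/

open MeasureTheory Set

/-- The scalar final size map `F(w) = L ∫_Ω c N (1 - e^{-a w})` under separable mixing. -/
noncomputable def finalSizeMap {n : ℕ} (Ω : Set (Fin n → ℝ))
    (a c N : (Fin n → ℝ) → ℝ) (L : ℝ) (w : ℝ) : ℝ :=
  L * ∫ σ in Ω, c σ * N σ * (1 - Real.exp (-(a σ * w)))

open Real

theorem exists_fixedPoint_of_strictAntiOn_div {F : ℝ → ℝ} {B δ : ℝ}
    (hF : ContinuousOn F (Ioi 0)) (hanti : StrictAntiOn (fun w => F w / w) (Ioi 0))
    (hB : ∀ w, 0 < w → F w ≤ B) (hδ : 0 < δ) (hδF : δ < F δ) :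
    ∃ v, 0 < v ∧ F v = v ∧ (∀ v', 0 < v' → F v' = v' → v' = v) ∧
      (∀ w, 0 < w → w < v → w < F w) ∧ (∀ w, 0 < w → F w ≤ w → v ≤ w) := by
  have hδB : δ < B := hδF.trans_le (hB δ hδ)
  have hIcc : Icc δ (B + 1) ⊆ Ioi 0 := fun w hw => hδ.trans_le hw.1
  obtain ⟨v, hv, hFv⟩ : (0 : ℝ) ∈ (fun w => F w - w) '' Icc δ (B + 1) :=
    intermediate_value_Icc' (f := fun w => F w - w) (by linarith)
      ((hF.mono hIcc).sub continuousOn_id) ⟨by linarith [hB (B + 1) (by linarith)], by linarith⟩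
  have hv0 : 0 < v := hIcc hv
  have hfix : F v = v := by linarith [hFv]
  have hratio : F v / v = 1 := by rw [hfix, div_self hv0.ne']
  refine ⟨v, hv0, hfix, fun v' hv' hFv' => ?_, fun w hw hwv => ?_, fun w hw hFw => ?_⟩
  · exact hanti.injOn hv' hv0 (by simp only [hratio, hFv', div_self hv'.ne'])
  · rw [← one_lt_div hw, ← hratio]
    exact hanti hw hv0 hwv
  · rw [← div_le_one hw, ← hratio] at hFw
    exact (hanti.le_iff_ge hw hv0).1 hFw

lemma strictAntiOn_one_sub_exp_neg_div :
    StrictAntiOn (fun t => (1 - exp (-t)) / t) (Ioi 0) := by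
  intro s hs t _ hst
  have := strictConvexOn_exp.secant_strict_mono (mem_univ 0) (mem_univ (-t)) (mem_univ (-s))
    (by linarith [mem_Ioi.1 hs]) (by linarith [mem_Ioi.1 hs]) (by linarith)
  simpa only [exp_zero, sub_zero, div_neg, ← neg_div, neg_sub] using this

lemma mul_one_sub_exp_neg_mul_lt {α w v : ℝ} (hα : 0 < α) (hw : 0 < w) (hwv : w < v) :
    w * (1 - exp (-(α * v))) < v * (1 - exp (-(α * w))) := by
  have h := strictAntiOn_one_sub_exp_neg_div (mul_pos hα hw) (mul_pos hα (hw.trans hwv))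
    (mul_lt_mul_of_pos_left hwv hα)
  rw [div_lt_div_iff₀ (mul_pos hα (hw.trans hwv)) (mul_pos hα hw)] at h
  nlinarith

lemma mul_exp_neg_le_one_sub_exp_neg (t : ℝ) : t * exp (-t) ≤ 1 - exp (-t) := by
  have h := mul_le_mul_of_nonneg_right (add_one_le_exp t) (exp_pos (-t)).le
  rw [← exp_add, add_neg_cancel, exp_zero] at h
  linarith

lemma norm_exp_neg_le_one {t : ℝ} (ht : 0 ≤ t) : ‖exp (-t)‖ ≤ 1 := by
  rw [norm_of_nonneg (exp_pos _).le, exp_le_one_iff]; linarith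

lemma norm_one_sub_exp_neg_le_one {t : ℝ} (ht : 0 ≤ t) : ‖1 - exp (-t)‖ ≤ 1 := by
  have : exp (-t) ≤ 1 := exp_le_one_iff.2 (by linarith)
  rw [norm_of_nonneg (by linarith)]; linarith [exp_pos (-t)]

section Weighted

variable {X : Type*} [MeasurableSpace X] {μ : Measure X} {g a : X → ℝ} {h : ℝ → ℝ}

lemma integrable_mul_comp_mul (hg : Integrable g μ) (ha : Measurable a) (ha0 : ∀ x, 0 ≤ a x)
    (hh : Continuous h) (hh1 : ∀ t, 0 ≤ t → ‖h t‖ ≤ 1) {w : ℝ} (hw : 0 ≤ w) :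
    Integrable (fun x => g x * h (a x * w)) μ :=
  hg.mul_bdd (hh.measurable.comp (ha.mul_const w)).aestronglyMeasurable
    (ae_of_all _ fun x => hh1 _ (mul_nonneg (ha0 x) hw))

lemma continuousOn_integral_mul_comp_mul (hg : Integrable g μ) (ha : Measurable a)
    (ha0 : ∀ x, 0 ≤ a x) (hh : Continuous h) (hh1 : ∀ t, 0 ≤ t → ‖h t‖ ≤ 1) :
    ContinuousOn (fun w => ∫ x, g x * h (a x * w) ∂μ) (Ici 0) := by
  refine continuousOn_of_dominated (bound := fun x => ‖g x‖)
    (fun w hw => (integrable_mul_comp_mul hg ha ha0 hh hh1 hw).aestronglyMeasurable)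
    (fun w hw => ae_of_all _ fun x => ?_) hg.norm
    (ae_of_all _ fun x => by fun_prop)
  rw [norm_mul]
  exact mul_le_of_le_one_right (norm_nonneg _) (hh1 _ (mul_nonneg (ha0 x) hw))

lemma integral_mul_one_sub_exp_neg_le (hg0 : ∀ x, 0 ≤ g x) (hg : Integrable g μ)
    (ha : Measurable a) (ha0 : ∀ x, 0 ≤ a x) {w : ℝ} (hw : 0 ≤ w) :
    ∫ x, g x * (1 - exp (-(a x * w))) ∂μ ≤ ∫ x, g x ∂μ :=
  integral_mono (integrable_mul_comp_mul hg ha ha0 (by fun_prop)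
    (fun _ => norm_one_sub_exp_neg_le_one) hw) hg fun x =>
      mul_le_of_le_one_right (hg0 x) (by linarith [exp_pos (-(a x * w))])

lemma mul_integral_mul_exp_neg_le (hg0 : ∀ x, 0 ≤ g x) (hg : Integrable g μ)
    (hga : Integrable (fun x => g x * a x) μ) (ha : Measurable a) (ha0 : ∀ x, 0 ≤ a x)
    {w : ℝ} (hw : 0 ≤ w) :
    w * ∫ x, g x * a x * exp (-(a x * w)) ∂μ ≤ ∫ x, g x * (1 - exp (-(a x * w))) ∂μ := by
  rw [← integral_const_mul]
  refine integral_mono ((integrable_mul_comp_mul hga ha ha0 (by fun_prop)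
    (fun _ => norm_exp_neg_le_one) hw).const_mul w)
    (integrable_mul_comp_mul hg ha ha0 (by fun_prop) (fun _ => norm_one_sub_exp_neg_le_one) hw)
    fun x => ?_
  calc w * (g x * a x * exp (-(a x * w))) = g x * (a x * w * exp (-(a x * w))) := by ring
    _ ≤ g x * (1 - exp (-(a x * w))) :=
      mul_le_mul_of_nonneg_left (mul_exp_neg_le_one_sub_exp_neg _) (hg0 x)

lemma exists_lt_mul_integral_one_sub_exp_neg {L : ℝ} (hg0 : ∀ x, 0 ≤ g x) (hg : Integrable g μ)
    (hga : Integrable (fun x => g x * a x) μ) (ha : Measurable a) (ha0 : ∀ x, 0 ≤ a x)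
    (hL : 0 ≤ L) (hR₀ : 1 < L * ∫ x, g x * a x ∂μ) :
    ∃ δ, 0 < δ ∧ δ < L * ∫ x, g x * (1 - exp (-(a x * δ))) ∂μ := by
  have hψ : ContinuousWithinAt (fun w => L * ∫ x, g x * a x * exp (-(a x * w)) ∂μ) (Ici 0) 0 :=
    ((continuousOn_integral_mul_comp_mul hga ha ha0 (by fun_prop)
      (fun _ => norm_exp_neg_le_one)).const_smul L) 0 self_mem_Ici
  have hψ0 : 1 < L * ∫ x, g x * a x * exp (-(a x * 0)) ∂μ := by simpa using hR₀
  obtain ⟨δ, hψδ, hδ⟩ :=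
    ((hψ.eventually (lt_mem_nhds hψ0)).filter_mono (nhdsWithin_mono _ Ioi_subset_Ici_self)
      |>.and self_mem_nhdsWithin).exists
  refine ⟨δ, hδ, ?_⟩
  calc δ < δ * (L * ∫ x, g x * a x * exp (-(a x * δ)) ∂μ) := lt_mul_right hδ hψδ
    _ = L * (δ * ∫ x, g x * a x * exp (-(a x * δ)) ∂μ) := by ring
    _ ≤ _ := mul_le_mul_of_nonneg_left (mul_integral_mul_exp_neg_le hg0 hg hga ha ha0 hδ.le) hL

lemma strictAntiOn_integral_one_sub_exp_neg_div (hg0 : ∀ x, 0 ≤ g x) (hg : Integrable g μ)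
    (hga : Integrable (fun x => g x * a x) μ) (ha : Measurable a) (ha0 : ∀ x, 0 ≤ a x)
    (hpos : 0 < ∫ x, g x * a x ∂μ) :
    StrictAntiOn (fun w => (∫ x, g x * (1 - exp (-(a x * w))) ∂μ) / w) (Ioi 0) := by
  intro w hw v hv hwv
  have hI : ∀ {u : ℝ}, 0 ≤ u → Integrable (fun x => g x * (1 - exp (-(a x * u)))) μ :=
    integrable_mul_comp_mul hg ha ha0 (by fun_prop) (fun _ => norm_one_sub_exp_neg_le_one)
  set D : X → ℝ := fun x =>
    g x * (v * (1 - exp (-(a x * w))) - w * (1 - exp (-(a x * v))))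
  have hD_fun : D = fun x => v * (g x * (1 - exp (-(a x * w))))
      - w * (g x * (1 - exp (-(a x * v)))) := by
    funext x; simp only [D]; ring
  have hD_int : Integrable D μ := hD_fun ▸ ((hI hw.le).const_mul v).sub ((hI hv.le).const_mul w)
  have hD_eq : ∫ x, D x ∂μ = v * ∫ x, g x * (1 - exp (-(a x * w))) ∂μ
      - w * ∫ x, g x * (1 - exp (-(a x * v))) ∂μ := by
    rw [hD_fun, integral_sub ((hI hw.le).const_mul v) ((hI hv.le).const_mul w),
      integral_const_mul, integral_const_mul]
  have hD_pos : ∀ x, 0 < g x → 0 < a x → 0 < D x := fun x hgx hax =>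
    mul_pos hgx (sub_pos.2 (mul_one_sub_exp_neg_mul_lt hax hw hwv))
  have hD_nonneg : ∀ x, 0 ≤ D x := by
    intro x
    rcases (ha0 x).lt_or_eq with hax | hax
    · exact mul_nonneg (hg0 x) (sub_pos.2 (mul_one_sub_exp_neg_mul_lt hax hw hwv)).le
    · simp [D, ← hax]
  have hsupp : Function.support (fun x => g x * a x) ⊆ Function.support D := fun x hx => by
    obtain ⟨hgx, hax⟩ := mul_ne_zero_iff.1 (Function.mem_support.1 hx)
    exact (hD_pos x ((hg0 x).lt_of_ne' hgx) ((ha0 x).lt_of_ne' hax)).ne'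
  have hD_int_pos : 0 < ∫ x, D x ∂μ := by
    rw [integral_pos_iff_support_of_nonneg hD_nonneg hD_int]
    exact ((integral_pos_iff_support_of_nonneg (fun x => mul_nonneg (hg0 x) (ha0 x)) hga).1
      hpos).trans_le (measure_mono hsupp)
  rw [div_lt_div_iff₀ hv hw]
  linarith

end Weighted

theorem final_size_lower_bound_general
    {n : ℕ} (Ω : Set (Fin n → ℝ))
    (a c N : (Fin n → ℝ) → ℝ)
    (hameas : Measurable a)
    (hann : ∀ x, 0 ≤ a x) (hcnn : ∀ x, 0 ≤ c x) (hNnn : ∀ x, 0 ≤ N x)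
    (hcN : IntegrableOn (fun x => c x * N x) Ω)
    (hcNa : IntegrableOn (fun x => c x * N x * a x) Ω)
    (L : ℝ)
    (hR0 : 1 < L * ∫ x in Ω, c x * N x * a x) :
    ∃ v : ℝ, 0 < v ∧ finalSizeMap Ω a c N L v = v ∧
      (∀ v' : ℝ, 0 < v' → finalSizeMap Ω a c N L v' = v' → v' = v) ∧
      (∀ w : ℝ, 0 < w → w < v → w < finalSizeMap Ω a c N L w) ∧
      (∀ w : ℝ, 0 < w → finalSizeMap Ω a c N L w ≤ w →
        v ≤ w ∧ ∀ x, 1 - Real.exp (-(a x * v)) ≤ 1 - Real.exp (-(a x * w))) := by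
  have hcN0 : ∀ x, 0 ≤ c x * N x := fun x => mul_nonneg (hcnn x) (hNnn x)
  have hL : 0 < L := pos_of_mul_pos_left (one_pos.trans hR0)
    (integral_nonneg fun x => mul_nonneg (hcN0 x) (hann x))
  have hpos : 0 < ∫ x in Ω, c x * N x * a x := pos_of_mul_pos_right (one_pos.trans hR0) hL.le
  obtain ⟨δ, hδ, hδF⟩ :=
    exists_lt_mul_integral_one_sub_exp_neg hcN0 hcN hcNa hameas hann hL.le hR0
  have hcont : ContinuousOn (finalSizeMap Ω a c N L) (Ioi 0) :=
    ((continuousOn_integral_mul_comp_mul hcN hameas hann (by fun_prop)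
      (fun _ => norm_one_sub_exp_neg_le_one)).const_smul L).mono Ioi_subset_Ici_self
  have hanti : StrictAntiOn (fun w => finalSizeMap Ω a c N L w / w) (Ioi 0) :=
    fun w hw v hv hwv => by
      simpa only [finalSizeMap, mul_div_assoc] using mul_lt_mul_of_pos_left
        (strictAntiOn_integral_one_sub_exp_neg_div hcN0 hcN hcNa hameas hann hpos hw hv hwv) hL
  have hbdd : ∀ w, 0 < w → finalSizeMap Ω a c N L w ≤ L * ∫ x in Ω, c x * N x :=
    fun w hw => mul_le_mul_of_nonneg_left
      (integral_mul_one_sub_exp_neg_le hcN0 hcN hameas hann hw.le) hL.le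
  obtain ⟨v, hv, hfix, huniq, hsub, hsuper⟩ :=
    exists_fixedPoint_of_strictAntiOn_div hcont hanti hbdd hδ hδF
  refine ⟨v, hv, hfix, huniq, hsub, fun w hw hFw => ?_⟩
  have hvw := hsuper w hw hFw
  exact ⟨hvw, fun x =>
    sub_le_sub_left (exp_le_exp.2 (neg_le_neg (mul_le_mul_of_nonneg_left hvw (hann x)))) 1⟩

/-- if R₀ > 1 the final size map has a unique positive fixed point v,
F(w) > w on (0,v), and every w > 0 with w ≥ F(w) satisfies w ≥ v, so the final size is
bounded below by 1 - e^{-a(x)v}. -/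
theorem final_size_lower_bound
    {n : ℕ} (Ω : Set (Fin n → ℝ)) (hΩ : MeasurableSet Ω)
    (a c N : (Fin n → ℝ) → ℝ)
    (hameas : Measurable a) (hcmeas : Measurable c) (hNmeas : Measurable N)
    (hann : ∀ x, 0 ≤ a x) (hcnn : ∀ x, 0 ≤ c x) (hNnn : ∀ x, 0 ≤ N x)
    (hcN : IntegrableOn (fun x => c x * N x) Ω)
    (hcNa : IntegrableOn (fun x => c x * N x * a x) Ω)
    (hpos : 0 < ∫ x in Ω, c x * N x * a x)
    (L : ℝ) (hL : 0 < L)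
    (hR0 : 1 < L * ∫ x in Ω, c x * N x * a x) :
    ∃ v : ℝ, 0 < v ∧ finalSizeMap Ω a c N L v = v ∧
      (∀ v' : ℝ, 0 < v' → finalSizeMap Ω a c N L v' = v' → v' = v) ∧
      (∀ w : ℝ, 0 < w → w < v → w < finalSizeMap Ω a c N L w) ∧
      (∀ w : ℝ, 0 < w → finalSizeMap Ω a c N L w ≤ w →
        v ≤ w ∧ ∀ x, 1 - Real.exp (-(a x * v)) ≤ 1 - Real.exp (-(a x * w))) :=
  final_size_lower_bound_general Ω a c N hameas hann hcnn hNnn hcN hcNa L hR0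
end
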